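/- arXiv:2512.07322 — 12 statements merged into one kernel-verified Lean document; each statement's English description precedes it below -/
import Mathlib

section
/- Let d ≥ 3 and let P(x) = (x−x₁)(x−x₂)⋯(x−x_d) with real roots x₁ < x₂ < ⋯ < x_d. Let ξ₁ < ξ₂ < ⋯ < ξ_{d−1} be the critical points of P (the roots of P′), with ξ_j ∈ (x_j, x_{j+1}), and set z_j = (x_j + x_{j+1})/2. Then ξ₁ < z₁ and ξ_{d−1} > z_{d−1}; consequently ξ_{d−1} − ξ₁ > z_{d−1} − z₁. -/
/-! At a critical point `ξ` of `P` that is not a root, the logarithmic derivative gives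
`∑ 1 / (ξ - xᵢ) = 0`. For `ξ₁ ∈ (x₁, x₂)` this reads `1 / (ξ₁ - x₁) = ∑_{i ≥ 2} 1 / (xᵢ - ξ₁)`,
a sum of at least two positive terms since `d ≥ 3`, so it strictly exceeds `1 / (x₂ - ξ₁)`:
`ξ₁` is nearer to `x₁` than to `x₂`. The reflection `t ↦ -t` gives the claim for `ξ_{d-1}`. -/

open Finset

theorem sum_inv_sub_eq_zero_of_deriv_prod_eq_zero {𝕜 ι : Type*} [NontriviallyNormedField 𝕜]
    {s : Finset ι} {r : ι → 𝕜} {ξ : 𝕜} (hξ : ∀ i ∈ s, ξ ≠ r i)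
    (hcrit : deriv (fun t ↦ ∏ i ∈ s, (t - r i)) ξ = 0) :
    ∑ i ∈ s, (ξ - r i)⁻¹ = 0 := by
  have hlog := logDeriv_prod (s := s) (f := fun i t ↦ t - r i) (x := ξ)
    (fun i hi ↦ sub_ne_zero.mpr (hξ i hi)) (fun i _ ↦ by fun_prop)
  simpa [logDeriv_apply, hcrit] using hlog.symm

section OrderedField

variable {K ι : Type*} [Field K] [LinearOrder K] [IsStrictOrderedRing K]
  {s : Finset ι} {r : ι → K} {ξ : K} {a b c : ι}

theorem sub_lt_sub_of_sum_inv_sub_eq_zero (ha : a ∈ s) (hb : b ∈ s) (hc : c ∈ s)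
    (hab : a ≠ b) (hac : a ≠ c) (hbc : b ≠ c) (hleft : r a < ξ)
    (hright : ∀ i ∈ s, i ≠ a → ξ < r i) (hsum : ∑ i ∈ s, (ξ - r i)⁻¹ = 0) :
    ξ - r a < r b - ξ := by
  classical
  have hbalance : (ξ - r a)⁻¹ = ∑ i ∈ s.erase a, (r i - ξ)⁻¹ := by
    rw [← add_sum_erase s _ ha, add_eq_zero_iff_eq_neg, ← sum_neg_distrib] at hsum
    simp_rw [hsum, ← inv_neg, neg_sub]
  have hb' : b ∈ s.erase a := mem_erase.mpr ⟨hab.symm, hb⟩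
  have hc' : c ∈ s.erase a := mem_erase.mpr ⟨hac.symm, hc⟩
  have hlt : (r b - ξ)⁻¹ < (ξ - r a)⁻¹ := by
    rw [hbalance]
    refine single_lt_sum (f := fun i ↦ (r i - ξ)⁻¹) hbc.symm hb' hc' ?_ fun i hi _ ↦ ?_
    · exact inv_pos.mpr (sub_pos.mpr (hright c hc hac.symm))
    · exact (inv_pos.mpr (sub_pos.mpr (hright i (mem_of_mem_erase hi) (ne_of_mem_erase hi)))).le
  exact (inv_lt_inv₀ (sub_pos.mpr (hright b hb hab.symm)) (sub_pos.mpr hleft)).mp hlt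

theorem lt_midpoint_of_sum_inv_sub_eq_zero (ha : a ∈ s) (hb : b ∈ s) (hc : c ∈ s)
    (hab : a ≠ b) (hac : a ≠ c) (hbc : b ≠ c) (hleft : r a < ξ)
    (hright : ∀ i ∈ s, i ≠ a → ξ < r i) (hsum : ∑ i ∈ s, (ξ - r i)⁻¹ = 0) :
    ξ < (r a + r b) / 2 := by
  linarith [sub_lt_sub_of_sum_inv_sub_eq_zero ha hb hc hab hac hbc hleft hright hsum]

theorem midpoint_lt_of_sum_inv_sub_eq_zero (ha : a ∈ s) (hb : b ∈ s) (hc : c ∈ s)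
    (hab : a ≠ b) (hac : a ≠ c) (hbc : b ≠ c) (hright : ξ < r a)
    (hleft : ∀ i ∈ s, i ≠ a → r i < ξ) (hsum : ∑ i ∈ s, (ξ - r i)⁻¹ = 0) :
    (r a + r b) / 2 < ξ := by
  have hsum' : ∑ i ∈ s, (-ξ - -r i)⁻¹ = 0 := by
    simp_rw [← neg_sub', inv_neg, sum_neg_distrib, hsum, neg_zero]
  linarith [lt_midpoint_of_sum_inv_sub_eq_zero (r := fun i ↦ -r i) ha hb hc hab hac hbc
    (neg_lt_neg hright) (fun i hi hia ↦ neg_lt_neg (hleft i hi hia)) hsum']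

end OrderedField

/-- For a strictly hyperbolic polynomial `P(x) = ∏_{i=0}^{d-1} (x - x i)` of degree `d ≥ 3`
with roots `x 0 < x 1 < ⋯ < x (d-1)` and critical points `ξ j ∈ (x j, x (j+1))`
(roots of `P'`), setting `z j = (x j + x (j+1))/2`, one has `ξ 0 < z 0`,
`ξ (d-2) > z (d-2)` and consequently `ξ (d-2) - ξ 0 > z (d-2) - z 0`. -/
theorem midpoints_extreme_critical_points
    (d : ℕ) (hd : 3 ≤ d)
    (x : ℕ → ℝ) (hx : ∀ i, i + 1 < d → x i < x (i + 1))
    (ξ : ℕ → ℝ)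
    (hξmem : ∀ j, j + 1 < d → ξ j ∈ Set.Ioo (x j) (x (j + 1)))
    (hξcrit : ∀ j, j + 1 < d →
      deriv (fun t : ℝ => ∏ i ∈ Finset.range d, (t - x i)) (ξ j) = 0)
    (z : ℕ → ℝ) (hz : ∀ j, z j = (x j + x (j + 1)) / 2) :
    ξ 0 < z 0 ∧ z (d - 2) < ξ (d - 2) ∧ z (d - 2) - z 0 < ξ (d - 2) - ξ 0 := by
  have hmono : MonotoneOn x (Set.Iic (d - 1)) :=
    (strictMonoOn_Iic_of_lt_succ fun m hm ↦ hx m (by omega)).monotoneOn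
  have hle : ∀ i j, i ≤ j → j < d → x i ≤ x j := fun i j hij hj ↦
    hmono (Set.mem_Iic.mpr (by omega)) (Set.mem_Iic.mpr (by omega)) hij
  have hsum : ∀ j, j + 1 < d → ∑ i ∈ range d, (ξ j - x i)⁻¹ = 0 := by
    intro j hj
    refine sum_inv_sub_eq_zero_of_deriv_prod_eq_zero (fun i hi ↦ ?_) (hξcrit j hj)
    obtain ⟨hl, hr⟩ := hξmem j hj
    rcases le_or_gt i j with hij | hij
    · exact ((hle i j hij (by omega)).trans_lt hl).ne'
    · exact (hr.trans_le (hle (j + 1) i hij (mem_range.mp hi))).ne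
  have hfirst : ξ 0 < z 0 := by
    obtain ⟨hl, hr⟩ := hξmem 0 (by omega)
    rw [hz 0]
    exact lt_midpoint_of_sum_inv_sub_eq_zero (b := 1) (c := 2) (mem_range.mpr (by omega))
      (mem_range.mpr (by omega)) (mem_range.mpr (by omega)) (by omega) (by omega) (by omega) hl
      (fun i hi _ ↦ hr.trans_le (hle 1 i (by omega) (mem_range.mp hi))) (hsum 0 (by omega))
  have hlast : z (d - 2) < ξ (d - 2) := by
    have hd1 : d - 2 + 1 = d - 1 := by omega
    obtain ⟨hl, hr⟩ := hξmem (d - 2) (by omega)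
    rw [hd1] at hr
    rw [hz, hd1, add_comm]
    exact midpoint_lt_of_sum_inv_sub_eq_zero (c := 0) (mem_range.mpr (by omega))
      (mem_range.mpr (by omega)) (mem_range.mpr (by omega)) (by omega) (by omega) (by omega) hr
      (fun i hi hi1 ↦ (hle i (d - 2) (by rw [mem_range] at hi; omega) (by omega)).trans_lt hl)
      (hsum (d - 2) (by omega))
  exact ⟨hfirst, hlast, by linarith⟩
end

section
/- Let F(x) = ∏_{i=1}^{k} (x−x_i)^{m_i} with real numbers x₁ < x₂ < ⋯ < x_k, positive integer multiplicities m₁, …, m_k, and m₁ + ⋯ + m_k = d ≥ 2. Fix an index j and a real u with 0 < u < min_{1 ≤ i ≤ k−1}(x_{i+1} − x_i), and let G be the polynomial obtained from F by replacing the root x_j by x_j + u (keeping all multiplicities and the order of the roots). Let ξ₁ ≤ ⋯ ≤ ξ_{d−1} and η₁ ≤ ⋯ ≤ η_{d−1} be the roots, counted with multiplicity, of F′ and G′ respectively. Then ξ_i ≤ η_i for every i = 1, …, d−1 (every root of the derivative is shifted to the right), and the sum of all the shifts satisfies Σ_{i=1}^{d−1} (η_i − ξ_i) = (d−1)·m_j·u/d.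 -/
/-!
Write `F = ∏ (X - xᵢ) ^ mᵢ`. Then `F' = ∏ (X - xᵢ) ^ (mᵢ - 1) * N` with `N = logDerivNumer`,
so `N / ∏ (X - xᵢ) = F' / F = ∑ mᵢ / (X - xᵢ)`; by Rolle, `N` has a root in each gap
`(x_r, x_{r+1})`, and these together with the `xᵢ` of multiplicity `mᵢ - 1` are all the roots
of `F'`. On each gap `t ↦ ∑ mᵢ / (t - xᵢ)` is decreasing, and it increases when `xⱼ` moves to
the right, so the critical point in every gap moves to the right. Pairing the roots of `F'`
and `G'` in this way, the sorted lists compare termwise by a counting argument. Finally,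
comparing the coefficients of `X ^ (d - 2)` in `F'` shows that the roots of `F'` add up to
`(d - 1) / d * ∑ mᵢ xᵢ`, which gives the total shift.
-/

open Polynomial Finset

section LogDerivNumer

variable {ι : Type*} [DecidableEq ι]

noncomputable def logDerivNumer {R : Type*} [CommRing R] (s : Finset ι) (m : ι → ℕ) (x : ι → R) :
    R[X] :=
  ∑ i ∈ s, C (m i : R) * ∏ l ∈ s.erase i, (X - C (x l))

theorem derivative_prod_X_sub_C_pow {R : Type*} [CommRing R] {s : Finset ι} {m : ι → ℕ}
    (x : ι → R) (hm : ∀ i ∈ s, 0 < m i) :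
    derivative (∏ i ∈ s, (X - C (x i)) ^ m i) =
      (∏ i ∈ s, (X - C (x i)) ^ (m i - 1)) * logDerivNumer s m x := by
  rw [derivative_prod_finset, logDerivNumer, mul_sum]
  refine sum_congr rfl fun i hi => ?_
  have hsplit : ∀ l ∈ s.erase i,
      (X - C (x l)) ^ m l = (X - C (x l)) ^ (m l - 1) * (X - C (x l)) := fun l hl => by
    rw [← pow_succ, Nat.sub_add_cancel (hm l (mem_of_mem_erase hl))]
  rw [prod_congr rfl hsplit, prod_mul_distrib, derivative_pow, derivative_X_sub_C,
    ← prod_erase_mul s (fun l => (X - C (x l)) ^ (m l - 1)) hi]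
  ring

theorem natDegree_logDerivNumer_le {R : Type*} [CommRing R] [Nontrivial R] (s : Finset ι)
    (m : ι → ℕ) (x : ι → R) : (logDerivNumer s m x).natDegree ≤ #s - 1 := by
  refine natDegree_sum_le_of_forall_le _ _ fun i hi => (natDegree_C_mul_le _ _).trans ?_
  rw [natDegree_prod_of_monic _ _ fun l _ => monic_X_sub_C (x l)]
  simp [card_erase_of_mem hi]

theorem eval_logDerivNumer {K : Type*} [Field K] {s : Finset ι} (m : ι → ℕ) (x : ι → K) {t : K}
    (ht : ∀ i ∈ s, t ≠ x i) :
    (logDerivNumer s m x).eval t = (∏ i ∈ s, (t - x i)) * ∑ i ∈ s, (m i : K) / (t - x i) := by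
  simp only [logDerivNumer, eval_finsetSum, eval_mul, eval_C, eval_prod, eval_sub, eval_X,
    mul_sum]
  refine sum_congr rfl fun i hi => ?_
  rw [← mul_prod_erase s (fun l => t - x l) hi]
  field_simp [sub_ne_zero.mpr (ht i hi)]

theorem sum_div_sub_eq_zero_of_isRoot {K : Type*} [Field K] {s : Finset ι} {m : ι → ℕ}
    {x : ι → K} {t : K} (hroot : (logDerivNumer s m x).IsRoot t) (ht : ∀ i ∈ s, t ≠ x i) :
    ∑ i ∈ s, (m i : K) / (t - x i) = 0 := by
  rw [IsRoot.def, eval_logDerivNumer m x ht] at hroot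
  exact (mul_eq_zero.mp hroot).resolve_left
    (prod_ne_zero_iff.mpr fun i hi => sub_ne_zero.mpr (ht i hi))

end LogDerivNumer

theorem MonotoneOn.lt_or_lt_of_mem_Ioo {α : Type*} [Preorder α] {x : ℕ → α} {k r i : ℕ}
    (hx : MonotoneOn x (Set.Iio k)) (hr : r + 1 < k) (hi : i < k) {t : α}
    (ht : t ∈ Set.Ioo (x r) (x (r + 1))) : x i < t ∨ t < x i := by
  rcases le_or_gt i r with h | h
  · exact Or.inl ((hx hi (by simp; omega) h).trans_lt ht.1)
  · exact Or.inr (ht.2.trans_le (hx hr hi h))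

theorem exists_isRoot_logDerivNumer_mem_Ioo {k r : ℕ} {m : ℕ → ℕ} {x : ℕ → ℝ}
    (hx : StrictMonoOn x (Set.Iio k)) (hm : ∀ i ∈ range k, 0 < m i) (hr : r + 1 < k) :
    ∃ c ∈ Set.Ioo (x r) (x (r + 1)), (logDerivNumer (range k) m x).IsRoot c := by
  set F := ∏ i ∈ range k, (X - C (x i)) ^ m i
  have hF : ∀ i ∈ range k, F.eval (x i) = 0 := fun i hi => by
    simp only [F, eval_prod, eval_pow, eval_sub, eval_X, eval_C]
    exact prod_eq_zero hi (by simp [(hm i hi).ne'])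
  obtain ⟨c, hc, hc0⟩ := exists_deriv_eq_zero (hx (by simp; omega) (by simp; omega) (by omega))
    F.continuousOn ((hF r (by simp; omega)).trans (hF (r + 1) (by simpa using hr)).symm)
  rw [Polynomial.deriv, derivative_prod_X_sub_C_pow x hm, eval_mul] at hc0
  refine ⟨c, hc, (mul_eq_zero.mp hc0).resolve_left ?_⟩
  simp only [eval_prod, eval_pow, eval_sub, eval_X, eval_C]
  refine prod_ne_zero_iff.mpr fun i hi => pow_ne_zero _ (sub_ne_zero.mpr ?_)
  rcases hx.monotoneOn.lt_or_lt_of_mem_Ioo hr (mem_range.mp hi) hc with h | h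
  exacts [h.ne', h.ne]

/-- `Sum.inl i` indexes the root `x i` of multiplicity `m i - 1` of the derivative of
`∏ (X - x i) ^ m i`, and `Sum.inr r` its simple root between `x r` and `x (r + 1)`. -/
def criticalIndex (k : ℕ) (m : ℕ → ℕ) : Multiset (ℕ ⊕ ℕ) :=
  (range k).val.bind (fun i => Multiset.replicate (m i - 1) (Sum.inl i)) +
    (range (k - 1)).val.map Sum.inr

theorem roots_derivative_prod_X_sub_C_pow {k : ℕ} {m : ℕ → ℕ} {x : ℕ → ℝ} (hk : 0 < k)
    (hx : StrictMonoOn x (Set.Iio k)) (hm : ∀ i ∈ range k, 0 < m i) :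
    ∃ y : ℕ → ℝ, (∀ r, r + 1 < k →
        y r ∈ Set.Ioo (x r) (x (r + 1)) ∧ ∑ i ∈ range k, (m i : ℝ) / (y r - x i) = 0) ∧
      (derivative (∏ i ∈ range k, (X - C (x i)) ^ m i)).roots =
        (criticalIndex k m).map (Sum.elim x y) := by
  choose! y hyI hyroot using fun r (hr : r + 1 < k) => exists_isRoot_logDerivNumer_mem_Ioo hx hm hr
  have hyx : ∀ r, r + 1 < k → ∀ i ∈ range k, y r ≠ x i := fun r hr i hi =>
    (hx.monotoneOn.lt_or_lt_of_mem_Ioo hr (mem_range.mp hi) (hyI r hr)).elim ne_of_gt ne_of_lt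
  refine ⟨y, fun r hr => ⟨hyI r hr, sum_div_sub_eq_zero_of_isRoot (hyroot r hr) (hyx r hr)⟩, ?_⟩
  have hderiv : derivative (∏ i ∈ range k, (X - C (x i)) ^ m i) ≠ 0 := by
    rw [derivative_ne_zero, natDegree_prod_of_monic _ _ fun i _ => (monic_X_sub_C (x i)).pow _]
    simp only [natDegree_pow, natDegree_X_sub_C, mul_one]
    exact (sum_pos hm ⟨0, by simpa using hk⟩).ne'
  rw [derivative_prod_X_sub_C_pow x hm] at hderiv ⊢
  have hN := right_ne_zero_of_mul hderiv
  have hymono : StrictMonoOn y (Set.Iio (k - 1)) := fun a ha b hb hab => by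
    simp only [Set.mem_Iio] at ha hb
    calc y a < x (a + 1) := (hyI a (by omega)).2
      _ ≤ x b := hx.monotoneOn (by simp; omega) (by simp; omega) hab
      _ < y b := (hyI b (by omega)).1
  have hNroots : (range (k - 1)).val.map y = (logDerivNumer (range k) m x).roots := by
    refine Multiset.eq_of_le_of_card_le ((Multiset.le_iff_subset ?_).mpr fun a ha => ?_) ?_
    · exact (range _).nodup.map_on fun a ha b hb => hymono.injOn (by simpa using ha)
        (by simpa using hb)
    · obtain ⟨r, hr, rfl⟩ := Multiset.mem_map.mp ha
      exact (mem_roots hN).mpr (hyroot r (by simp at hr; omega))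
    · simpa using (card_roots' _).trans (natDegree_logDerivNumer_le (range k) m x)
  rw [roots_mul hderiv, ← hNroots, roots_prod _ _ (left_ne_zero_of_mul hderiv), criticalIndex,
    Multiset.map_add, Multiset.map_bind, Multiset.map_map]
  simp [roots_pow, Multiset.map_replicate, Multiset.nsmul_singleton]

theorem sum_div_sub_lt_sum_div_sub {ι K : Type*} [Field K] [LinearOrder K] [IsStrictOrderedRing K]
    {s : Finset ι} (hs : s.Nonempty) {m x x' : ι → K} (hm : ∀ i ∈ s, 0 < m i)
    (hxx' : ∀ i ∈ s, x i ≤ x' i) {y z : K} (hzy : z < y) (hsep : ∀ i ∈ s, x' i < z ∨ y < x i) :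
    ∑ i ∈ s, m i / (y - x i) < ∑ i ∈ s, m i / (z - x' i) := by
  refine sum_lt_sum_of_nonempty hs fun i hi => ?_
  have hlt : z - x' i < y - x i := by linarith [hxx' i hi]
  rcases hsep i hi with h | h
  · exact div_lt_div_of_pos_left (hm i hi) (by linarith) hlt
  · rw [div_eq_mul_one_div, div_eq_mul_one_div (m i)]
    exact mul_lt_mul_of_pos_left (one_div_lt_one_div_of_neg_of_lt (by linarith) hlt) (hm i hi)

theorem le_of_sum_div_sub_eq_zero {k r : ℕ} {m : ℕ → ℕ} {x x' : ℕ → ℝ}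
    (hm : ∀ i ∈ range k, 0 < m i) (hx : MonotoneOn x (Set.Iio k))
    (hx' : MonotoneOn x' (Set.Iio k)) (hxx' : ∀ i, x i ≤ x' i) (hr : r + 1 < k) {y z : ℝ}
    (hy : y < x (r + 1)) (hz : x' r < z) (hy0 : ∑ i ∈ range k, (m i : ℝ) / (y - x i) = 0)
    (hz0 : ∑ i ∈ range k, (m i : ℝ) / (z - x' i) = 0) : y ≤ z := by
  by_contra! hzy
  refine (sum_div_sub_lt_sum_div_sub ⟨0, by simp; omega⟩ (by exact_mod_cast hm)
    (fun i _ => hxx' i) hzy fun i hi => ?_).ne (hy0.trans hz0.symm)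
  rw [mem_range] at hi
  rcases le_or_gt i r with h | h
  · exact Or.inl ((hx' hi (by simp; omega) h).trans_lt hz)
  · exact Or.inr (hy.trans_le (hx hr hi h))

theorem Multiset.card_filter_map_le_le_of_le {ι α : Type*} [Preorder α] [DecidableLE α]
    {s : Multiset ι} {f g : ι → α} (hfg : ∀ a ∈ s, f a ≤ g a) (t : α) :
    Multiset.card ((s.map g).filter (· ≤ t)) ≤ Multiset.card ((s.map f).filter (· ≤ t)) := by
  rw [Multiset.filter_map, Multiset.filter_map, Multiset.card_map, Multiset.card_map]
  calc Multiset.card (s.filter (fun a => g a ≤ t))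
      = Multiset.card (s.filter (fun a => g a ≤ t ∧ f a ≤ t)) :=
        congr_arg _ (Multiset.filter_congr fun a ha =>
          (and_iff_left_of_imp ((hfg a ha).trans ·)).symm)
    _ ≤ Multiset.card (s.filter (fun a => f a ≤ t)) :=
        Multiset.card_le_card (Multiset.monotone_filter_right s fun _ => And.right)

theorem le_of_map_eq_map_of_le {ι α : Type*} [LinearOrder α] {n : ℕ} {ξ η : ℕ → α}
    (hξ : MonotoneOn ξ (Set.Iio n)) (hη : MonotoneOn η (Set.Iio n)) {s : Multiset ι}
    {f g : ι → α} (hfg : ∀ a ∈ s, f a ≤ g a) (hf : s.map f = (range n).val.map ξ)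
    (hg : s.map g = (range n).val.map η) {i : ℕ} (hi : i < n) : ξ i ≤ η i := by
  by_contra! hlt
  have hcount := Multiset.card_filter_map_le_le_of_le hfg (η i)
  rw [hf, hg, Multiset.filter_map, Multiset.filter_map, Multiset.card_map,
    Multiset.card_map] at hcount
  change #((range n).filter (η · ≤ η i)) ≤ #((range n).filter (ξ · ≤ η i)) at hcount
  have hlower : range (i + 1) ⊆ (range n).filter (η · ≤ η i) := fun a ha => by
    simp only [mem_range, mem_filter] at ha ⊢
    exact ⟨by omega, hη (by simp; omega) hi (by omega)⟩
  have hupper : (range n).filter (ξ · ≤ η i) ⊆ range i := fun a ha => by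
    simp only [mem_range, mem_filter] at ha ⊢
    by_contra! hia
    exact (ha.2.trans_lt hlt).not_ge (hξ hi ha.1 hia)
  have := card_le_card hlower
  have := card_le_card hupper
  simp only [card_range] at *
  omega

theorem nextCoeff_prod_X_sub_C_pow {ι R : Type*} [CommRing R] (s : Finset ι) (m : ι → ℕ)
    (x : ι → R) : (∏ i ∈ s, (X - C (x i)) ^ m i).nextCoeff = -∑ i ∈ s, (m i : R) * x i := by
  rw [Monic.nextCoeff_prod _ _ fun i _ => (monic_X_sub_C (x i)).pow _, ← sum_neg_distrib]
  refine sum_congr rfl fun i _ => ?_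
  rw [(monic_X_sub_C _).nextCoeff_pow, nextCoeff_X_sub_C, nsmul_eq_mul, mul_neg]

theorem mul_sum_roots_derivative_prod_X_sub_C_pow {ι R : Type*} [CommRing R] [Nontrivial R]
    {s : Finset ι} {m : ι → ℕ} {x : ι → R} {d : ℕ} {ξ : ℕ → R} (hd : 2 ≤ d)
    (hsum : ∑ i ∈ s, m i = d)
    (h : derivative (∏ i ∈ s, (X - C (x i)) ^ m i) =
      C (d : R) * ∏ i ∈ range (d - 1), (X - C (ξ i))) :
    (d : R) * ∑ i ∈ range (d - 1), ξ i = (d - 1) * ∑ i ∈ s, (m i : R) * x i := by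
  set F := ∏ i ∈ s, (X - C (x i)) ^ m i
  set P := ∏ i ∈ range (d - 1), (X - C (ξ i))
  have hF : F.natDegree = d := by
    rw [natDegree_prod_of_monic _ _ fun i _ => (monic_X_sub_C (x i)).pow _]
    simpa only [(monic_X_sub_C _).natDegree_pow, natDegree_X_sub_C, mul_one] using hsum
  have hP : P.natDegree = d - 1 := by
    rw [natDegree_prod_of_monic _ _ fun i _ => monic_X_sub_C (ξ i)]
    simp
  have hFcoeff : F.coeff (d - 1) = -∑ i ∈ s, (m i : R) * x i := by
    rw [← nextCoeff_prod_X_sub_C_pow, nextCoeff_of_natDegree_pos (by rw [hF]; omega), hF]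
  have hPcoeff : P.coeff (d - 2) = -∑ i ∈ range (d - 1), ξ i := by
    rw [← prod_X_sub_C_nextCoeff, nextCoeff_of_natDegree_pos (by rw [hP]; omega), hP]
    rfl
  have hcoeff := congr_arg (coeff · (d - 2)) h
  simp only [coeff_derivative, coeff_C_mul, show d - 2 + 1 = d - 1 by omega, hFcoeff,
    hPcoeff, Nat.cast_sub hd] at hcoeff
  push_cast at hcoeff
  linear_combination hcoeff

theorem derivative_prod_X_sub_C_pow_eq_of_deriv {ι : Type*} {s : Finset ι} {m : ι → ℕ}
    {x : ι → ℝ} {c : ℝ} {n : ℕ} {ξ : ℕ → ℝ}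
    (h : ∀ t, deriv (fun t => ∏ i ∈ s, (t - x i) ^ m i) t = c * ∏ i ∈ range n, (t - ξ i)) :
    derivative (∏ i ∈ s, (X - C (x i)) ^ m i) = C c * ∏ i ∈ range n, (X - C (ξ i)) :=
  Polynomial.funext fun t => by
    simpa [← Polynomial.deriv, eval_prod] using h t

theorem roots_C_mul_prod_X_sub_C {ι R : Type*} [CommRing R] [IsDomain R] {c : R} (hc : c ≠ 0)
    (s : Finset ι) (f : ι → R) : (C c * ∏ i ∈ s, (X - C (f i))).roots = s.val.map f := by
  rw [roots_C_mul _ hc]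
  simpa using roots_multiset_prod_X_sub_C (s.val.map f)

theorem strictMonoOn_update_add {k j : ℕ} {x : ℕ → ℝ} {u : ℝ}
    (hx : ∀ i, i + 1 < k → x i < x (i + 1)) (hu : 0 ≤ u)
    (hugap : ∀ i, i + 1 < k → u < x (i + 1) - x i) :
    StrictMonoOn (Function.update x j (x j + u)) (Set.Iio k) := by
  refine strictMonoOn_of_lt_add_one Set.ordConnected_Iio fun i _ _ hi => ?_
  have := hx i hi
  have := hugap i hi
  simp only [Function.update_apply]
  split_ifs <;> subst_vars <;> first | omega | linarith

theorem sum_mul_update_add {ι R : Type*} [DecidableEq ι] [CommRing R] {s : Finset ι} {j : ι}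
    (hj : j ∈ s) (w x : ι → R) (u : R) :
    ∑ i ∈ s, w i * Function.update x j (x j + u) i = ∑ i ∈ s, w i * x i + w j * u := by
  have hterm : ∀ i, w i * Function.update x j (x j + u) i =
      w i * x i + if i = j then w j * u else 0 := fun i => by
    by_cases h : i = j <;> simp [h, mul_add]
  rw [sum_congr rfl fun i _ => hterm i, sum_add_distrib, sum_ite_eq' s j, if_pos hj]

/-- Shifting one root of a hyperbolic polynomial `F(x) = ∏ (x - x i)^(m i)` to the right
by `u` (smaller than the minimal gap between consecutive roots) shifts every root of the
derivative to the right, and the sum of all the shifts equals `(d-1)·m j·u/d`. -/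
theorem shift_root_shifts_critical_points
    (k d : ℕ) (hk : 0 < k) (hd : 2 ≤ d)
    (x : ℕ → ℝ) (hx : ∀ i, i + 1 < k → x i < x (i + 1))
    (m : ℕ → ℕ) (hm : ∀ i, i < k → 0 < m i)
    (hsum : ∑ i ∈ Finset.range k, m i = d)
    (j : ℕ) (hj : j < k)
    (u : ℝ) (hu : 0 < u) (hugap : ∀ i, i + 1 < k → u < x (i + 1) - x i)
    (ξ η : ℕ → ℝ)
    (hξmono : ∀ i, i + 1 < d - 1 → ξ i ≤ ξ (i + 1))
    (hηmono : ∀ i, i + 1 < d - 1 → η i ≤ η (i + 1))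
    (hξ : ∀ t : ℝ,
      deriv (fun s : ℝ => ∏ i ∈ Finset.range k, (s - x i) ^ m i) t
        = d * ∏ i ∈ Finset.range (d - 1), (t - ξ i))
    (hη : ∀ t : ℝ,
      deriv (fun s : ℝ =>
        ∏ i ∈ Finset.range k, (s - Function.update x j (x j + u) i) ^ m i) t
        = d * ∏ i ∈ Finset.range (d - 1), (t - η i)) :
    (∀ i, i < d - 1 → ξ i ≤ η i) ∧
      ∑ i ∈ Finset.range (d - 1), (η i - ξ i) = ((d : ℝ) - 1) * (m j : ℝ) * u / d := by
  set x' := Function.update x j (x j + u)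
  have hxx' : ∀ i, x i ≤ x' i := fun i => by
    by_cases h : i = j <;> simp [x', h, hu.le]
  have hm' : ∀ i ∈ range k, 0 < m i := fun i hi => hm i (mem_range.mp hi)
  have hmono := strictMonoOn_of_lt_add_one Set.ordConnected_Iio fun i _ _ hi => hx i hi
  have hmono' : StrictMonoOn x' (Set.Iio k) := strictMonoOn_update_add hx hu.le hugap
  have hF := derivative_prod_X_sub_C_pow_eq_of_deriv hξ
  have hG := derivative_prod_X_sub_C_pow_eq_of_deriv hη
  have hd0 : (d : ℝ) ≠ 0 := by positivity
  obtain ⟨y, hy, hyroots⟩ := roots_derivative_prod_X_sub_C_pow hk hmono hm'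
  obtain ⟨z, hz, hzroots⟩ := roots_derivative_prod_X_sub_C_pow hk hmono' hm'
  rw [hF, roots_C_mul_prod_X_sub_C hd0] at hyroots
  rw [hG, roots_C_mul_prod_X_sub_C hd0] at hzroots
  constructor
  · intro i hi
    refine le_of_map_eq_map_of_le
      (monotoneOn_of_le_add_one Set.ordConnected_Iio fun a _ _ ha => hξmono a ha)
      (monotoneOn_of_le_add_one Set.ordConnected_Iio fun a _ _ ha => hηmono a ha)
      (fun a ha => ?_) hyroots.symm hzroots.symm hi
    rcases a with i | r
    · exact hxx' i
    · have hr : r + 1 < k := by simp [criticalIndex, Multiset.mem_replicate] at ha; omega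
      exact le_of_sum_div_sub_eq_zero hm' hmono.monotoneOn hmono'.monotoneOn hxx' hr
        (hy r hr).1.2 (hz r hr).1.1 (hy r hr).2 (hz r hr).2
  · have hsumξ := mul_sum_roots_derivative_prod_X_sub_C_pow hd hsum hF
    have hsumη := mul_sum_roots_derivative_prod_X_sub_C_pow hd hsum hG
    rw [sum_mul_update_add (mem_range.mpr hj)] at hsumη
    rw [sum_sub_distrib, eq_div_iff hd0]
    linear_combination hsumη - hsumξ
end

section
/- Under the hypotheses of the F-family, if in addition 0 < c ≤ 1/3.1, then M̃ > M; in particular the inequality (R): M̃ ≤ M fails, so the case L−R+ is not realizable by F. -/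
/-!
The largest midpoint gap is `M = z₄ - z₃ = (1 - b)/2`. For `c ≤ 10/31` the derivative `F'` is
negative on the whole interval `(c, c + (1 - b)/2]`. Since `F' = 5 ∏ (x - ξᵢ)` is negative exactly on
`(ξ₁, ξ₂) ∪ (ξ₃, ξ₄)`, and Vieta's formulas for the sum and the product of the `ξᵢ` exclude
`(ξ₁, ξ₂)`, that interval lies in `(ξ₃, ξ₄)`; hence `M̃ ≥ ξ₄ - ξ₃ > (1 - b)/2 = M`.
-/

open Set

lemma deriv_quintic (a b c x : ℝ) :
    deriv (fun t : ℝ => t * (t - a) * (t - b) * (t - c) * (t - 1)) x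
      = (x - a) * (x - b) * (x - c) * (x - 1) + x * (x - b) * (x - c) * (x - 1)
        + x * (x - a) * (x - c) * (x - 1) + x * (x - a) * (x - b) * (x - 1)
        + x * (x - a) * (x - b) * (x - c) := by
  have hlin (r : ℝ) : HasDerivAt (fun t : ℝ => t - r) 1 x := (hasDerivAt_id x).sub_const r
  have h := ((((hasDerivAt_id x).mul (hlin a)).mul (hlin b)).mul (hlin c)).mul (hlin 1)
  exact h.deriv.trans (by simp only [id, Pi.mul_apply]; ring)

lemma deriv_quintic_neg {a b c x : ℝ} (ha : 0 ≤ a) (hab : a ≤ b) (hbc : b ≤ c)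
    (hc : c ≤ 10 / 31) (hx : x ∈ Ioc c (c + (1 - b) / 2)) :
    deriv (fun t : ℝ => t * (t - a) * (t - b) * (t - c) * (t - 1)) x < 0 := by
  obtain ⟨hcx, hx⟩ := hx
  have hxc : 0 < x - c := by linarith
  have hxa : 0 < x - a := by linarith
  have hxb : 0 < x - b := by linarith
  -- In `t = x - c ∈ (0, 1/2]` this quadratic is convex, equal to `c² - c ≤ 0` at `t = 0` and to
  -- `c² + 2c - 3/4` at `t = 1/2`, which is negative exactly for `c < (√7 - 2)/2 ≈ 0.3229`:
  -- this is where the bound `c ≤ 10/31` enters.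
  have hquad : x * (x - c) - (1 - x) * (4 * x - 3 * c) < 0 := by
    nlinarith [mul_nonneg (by linarith : (0:ℝ) ≤ 1 - 2 * (x - c)) (by nlinarith : (0:ℝ) ≤ c * (1 - c)),
      mul_pos hxc (by nlinarith : (0:ℝ) < 3 / 4 - 2 * c - c ^ 2),
      mul_nonneg hxc.le (by linarith : (0:ℝ) ≤ 1 / 2 - (x - c))]
  have hmain : (x - a) * (x - b) * (x * (x - c) - (1 - x) * (4 * x - 3 * c)) < 0 :=
    mul_neg_of_pos_of_neg (mul_pos hxa hxb) hquad
  have hb : 0 ≤ b := ha.trans hab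
  have hrest : (x - 1) * (a * ((x - b) * (x - c)) + b * ((x - a) * (x - c))) ≤ 0 :=
    mul_nonpos_of_nonpos_of_nonneg (by linarith) (by positivity)
  rw [deriv_quintic]
  linear_combination hmain + hrest

lemma mem_Ioo_or_mem_Ioo_of_quartic_neg {ξ₁ ξ₂ ξ₃ ξ₄ x : ℝ}
    (h12 : ξ₁ ≤ ξ₂) (h34 : ξ₃ ≤ ξ₄)
    (h : (x - ξ₁) * (x - ξ₂) * (x - ξ₃) * (x - ξ₄) < 0) :
    x ∈ Ioo ξ₁ ξ₂ ∨ x ∈ Ioo ξ₃ ξ₄ := by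
  have mem_of_neg {p q : ℝ} (hpq : p ≤ q) (h : (x - p) * (x - q) < 0) : x ∈ Ioo p q :=
    ⟨by nlinarith, by nlinarith⟩
  rw [mul_assoc _ (x - ξ₃)] at h
  rcases mul_neg_iff.1 h with ⟨-, h34'⟩ | ⟨h12', -⟩
  · exact .inr (mem_of_neg h34 h34')
  · exact .inl (mem_of_neg h12 h12')

lemma sum_prod_of_deriv_quintic_eq {a b c ξ₁ ξ₂ ξ₃ ξ₄ : ℝ}
    (hder : ∀ x : ℝ,
      deriv (fun t : ℝ => t * (t - a) * (t - b) * (t - c) * (t - 1)) x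
        = 5 * (x - ξ₁) * (x - ξ₂) * (x - ξ₃) * (x - ξ₄)) :
    ξ₁ + ξ₂ + ξ₃ + ξ₄ = 4 * (1 + a + b + c) / 5 ∧ ξ₁ * ξ₂ * ξ₃ * ξ₄ = a * b * c / 5 := by
  have key (x : ℝ) := (deriv_quintic a b c x).symm.trans (hder x)
  -- Evaluating at `0, ±1, ±2` isolates the constant and the cubic coefficient.
  exact ⟨by linear_combination (key 2 - key (-2) - 2 * key 1 + 2 * key (-1)) / 60,
    by linear_combination -key 0 / 5⟩
lemma half_sub_lt_sub_of_deriv_quintic_eq {a b c ξ₁ ξ₂ ξ₃ ξ₄ : ℝ}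
    (ha : 0 ≤ a) (hab : a ≤ b) (hbc : b ≤ c) (hc : c ≤ 10 / 31)
    (h12 : ξ₁ ≤ ξ₂) (h23 : ξ₂ ≤ ξ₃) (h34 : ξ₃ ≤ ξ₄)
    (hder : ∀ x : ℝ,
      deriv (fun t : ℝ => t * (t - a) * (t - b) * (t - c) * (t - 1)) x
        = 5 * (x - ξ₁) * (x - ξ₂) * (x - ξ₃) * (x - ξ₄)) :
    (1 - b) / 2 < ξ₄ - ξ₃ := by
  set x₁ := c + (1 - b) / 2 with hx₁_def
  have hneg : ∀ x ∈ Ioc c x₁, (x - ξ₁) * (x - ξ₂) * (x - ξ₃) * (x - ξ₄) < 0 := fun x hx => by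
    linarith [hder x ▸ deriv_quintic_neg ha hab hbc hc hx]
  obtain ⟨hsum, hprod⟩ := sum_prod_of_deriv_quintic_eq hder
  rcases mem_Ioo_or_mem_Ioo_of_quartic_neg h12 h34 (hneg x₁ ⟨by linarith, le_rfl⟩)
    with ⟨-, hx₁ξ₂⟩ | ⟨hξ₃x₁, hx₁ξ₄⟩
  · have hx₁ : 0 < x₁ := by linarith
    have hξ₁ : 0 ≤ ξ₁ := by
      by_contra! hξ₁
      have : ξ₁ * (ξ₂ * ξ₃ * ξ₄) < 0 :=
        mul_neg_of_neg_of_pos hξ₁ (by apply mul_pos (mul_pos _ _) <;> linarith)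
      linarith [mul_nonneg (mul_nonneg ha (ha.trans hab)) (ha.trans (hab.trans hbc))]
    linarith
  · have hξ₃c : ξ₃ ≤ c := by
      by_contra! hcξ₃
      simpa using hneg ξ₃ ⟨hcξ₃, hξ₃x₁.le⟩
    linarith

theorem F_family_c_le_inv31_Rminus_general
    (a b c : ℝ) (ha : 0 ≤ a) (hab : a ≤ b) (hbc : b ≤ c) (hc : c ≤ 1 / 3.1)
    (ξ₁ ξ₂ ξ₃ ξ₄ : ℝ) (hξ12 : ξ₁ ≤ ξ₂) (hξ23 : ξ₂ ≤ ξ₃) (hξ34 : ξ₃ ≤ ξ₄)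
    (hder : ∀ x : ℝ,
      deriv (fun t : ℝ => t * (t - a) * (t - b) * (t - c) * (t - 1)) x
        = 5 * (x - ξ₁) * (x - ξ₂) * (x - ξ₃) * (x - ξ₄))
    (z₁ z₂ z₃ z₄ m M mt Mt : ℝ)
    (hz₁ : z₁ = a / 2) (hz₂ : z₂ = (a + b) / 2)
    (hz₃ : z₃ = (b + c) / 2) (hz₄ : z₄ = (c + 1) / 2)
    (hM : M = max (max (z₂ - z₁) (z₃ - z₂)) (z₄ - z₃))
    (hMt : Mt = max (max (ξ₂ - ξ₁) (ξ₃ - ξ₂)) (ξ₄ - ξ₃)) :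
    Mt > M ∧ ¬ (mt < m ∧ Mt ≤ M) := by
  have hc' : c ≤ 10 / 31 := by norm_num at hc; linarith
  have hM' : M = (1 - b) / 2 := by
    rw [hM, hz₁, hz₂, hz₃, hz₄, max_eq_right (max_le (by linarith) (by linarith))]
    ring
  have hgap := half_sub_lt_sub_of_deriv_quintic_eq ha hab hbc hc' hξ12 hξ23 hξ34 hder
  have hMt' : ξ₄ - ξ₃ ≤ Mt := hMt ▸ le_max_right _ _
  have hlt : M < Mt := by linarith
  exact ⟨hlt, fun h => h.2.not_gt hlt⟩

/-- For `F(x) = x(x-a)(x-b)(x-c)(x-1)` with `0 ≤ a ≤ b ≤ c ≤ 1` and `0 < c ≤ 1/3.1`,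
one has `M̃ > M`; in particular `(R) : M̃ ≤ M` fails, so the case L−R+ (`m > m̃` and
`M̃ ≤ M`) is not realizable by `F`. -/
theorem F_family_c_le_inv31_Rminus
    (a b c : ℝ) (ha : 0 ≤ a) (hab : a ≤ b) (hbc : b ≤ c) (hc1 : c ≤ 1)
    (hc0 : 0 < c) (hc : c ≤ 1 / 3.1)
    (ξ₁ ξ₂ ξ₃ ξ₄ : ℝ) (hξ12 : ξ₁ ≤ ξ₂) (hξ23 : ξ₂ ≤ ξ₃) (hξ34 : ξ₃ ≤ ξ₄)
    (hder : ∀ x : ℝ,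
      deriv (fun t : ℝ => t * (t - a) * (t - b) * (t - c) * (t - 1)) x
        = 5 * (x - ξ₁) * (x - ξ₂) * (x - ξ₃) * (x - ξ₄))
    (z₁ z₂ z₃ z₄ m M mt Mt : ℝ)
    (hz₁ : z₁ = a / 2) (hz₂ : z₂ = (a + b) / 2)
    (hz₃ : z₃ = (b + c) / 2) (hz₄ : z₄ = (c + 1) / 2)
    (hm : m = min (min (z₂ - z₁) (z₃ - z₂)) (z₄ - z₃))
    (hM : M = max (max (z₂ - z₁) (z₃ - z₂)) (z₄ - z₃))
    (hmt : mt = min (min (ξ₂ - ξ₁) (ξ₃ - ξ₂)) (ξ₄ - ξ₃))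
    (hMt : Mt = max (max (ξ₂ - ξ₁) (ξ₃ - ξ₂)) (ξ₄ - ξ₃)) :
    Mt > M ∧ ¬ (mt < m ∧ Mt ≤ M) :=
  F_family_c_le_inv31_Rminus_general a b c ha hab hbc hc ξ₁ ξ₂ ξ₃ ξ₄ hξ12 hξ23 hξ34 hder z₁ z₂ z₃ z₄
    m M mt Mt hz₁ hz₂ hz₃ hz₄ hM hMt
end

section
/- Let Q(x) = x(x−r)(x−1)(x−t₁)(x−t₂) with 0 ≤ r ≤ 1 and 3 ≤ t₁ ≤ t₂. Then Q realizes the case L+, i.e. m ≤ m̃, where m is the minimum of the distances between consecutive midpoints of Q and m̃ is the minimum of the distances between consecutive roots of Q′. -/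
/-!
Consecutive midpoints `r / 2` and `(r + 1) / 2` are `1 / 2` apart, so `m ≤ 1 / 2`, and it
suffices to show that consecutive critical points are at least `1 / 2` apart. The sign of
`Q' = 5 (x - ξ₁)(x - ξ₂)(x - ξ₃)(x - ξ₄)` at a point says on which side of each `ξᵢ` it lies.
The signs of `Q'` at `r / 2`, `(r + 1) / 2` (`≤ 0`), `1` (`≥ 0`), `3 / 2` (`> 0`), `t₁ - 1 / 2`
and `t₁` (`≤ 0`) give
`ξ₁ ≤ r / 2 < (r + 1) / 2 ≤ ξ₂ ≤ 1 < 3 / 2 < ξ₃ ≤ t₁ - 1 / 2 < t₁ ≤ ξ₄`.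
-/

def Q (r t₁ t₂ x : ℝ) : ℝ := x * (x - r) * (x - 1) * (x - t₁) * (x - t₂)

def Q' (r t₁ t₂ x : ℝ) : ℝ :=
  (x - r) * (x - 1) * (x - t₁) * (x - t₂) + x * (x - 1) * (x - t₁) * (x - t₂)
    + x * (x - r) * (x - t₁) * (x - t₂) + x * (x - r) * (x - 1) * (x - t₂)
    + x * (x - r) * (x - 1) * (x - t₁)

theorem hasDerivAt_Q (r t₁ t₂ x : ℝ) : HasDerivAt (Q r t₁ t₂) (Q' r t₁ t₂ x) x := by
  have hX := hasDerivAt_id' x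
  exact ((((hX.mul (hX.sub_const r)).mul (hX.sub_const 1)).mul (hX.sub_const t₁)).mul
    (hX.sub_const t₂)).congr_deriv (by simp only [Q', Pi.mul_apply]; ring)

section SignsOfQ'

variable {r t₁ t₂ : ℝ}

theorem Q'_half_nonpos (hr : r ≤ 2) (ht₁ : 1 ≤ t₁) (ht : t₁ ≤ t₂) :
    Q' r t₁ t₂ (r / 2) ≤ 0 := by
  have h : Q' r t₁ t₂ (r / 2) = -(r / 2) ^ 2 * ((t₁ - r / 2) * (t₂ - r / 2)
      + (1 - r / 2) * (t₂ - r / 2) + (1 - r / 2) * (t₁ - r / 2)) := by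
    unfold Q'; ring
  rw [h]
  refine mul_nonpos_of_nonpos_of_nonneg (neg_nonpos.2 (sq_nonneg _)) ?_
  have h1 : 0 ≤ 1 - r / 2 := by linarith
  have h2 : 0 ≤ t₁ - r / 2 := by linarith
  have h3 : 0 ≤ t₂ - r / 2 := by linarith
  positivity

theorem Q'_midpoint_nonpos (hr : r ≤ 1) (ht₁ : 3 ≤ t₁) (ht : t₁ ≤ t₂) :
    Q' r t₁ t₂ ((r + 1) / 2) ≤ 0 := by
  set x := (r + 1) / 2
  have h : Q' r t₁ t₂ x = -((1 - r) / 2) ^ 2 *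
      ((t₁ - x) * (t₂ - x) - x * ((t₁ - x) + (t₂ - x))) := by
    unfold Q' x; ring
  rw [h]
  refine mul_nonpos_of_nonpos_of_nonneg (neg_nonpos.2 (sq_nonneg _)) ?_
  have hx : x ≤ 1 := by simp only [x]; linarith
  nlinarith [mul_nonneg (by linarith : (0 : ℝ) ≤ t₁ - x - 2) (by linarith : (0 : ℝ) ≤ t₂ - x - 2)]

theorem Q'_one_nonneg (hr : r ≤ 1) (ht₁ : 1 ≤ t₁) (ht : t₁ ≤ t₂) :
    0 ≤ Q' r t₁ t₂ 1 := by
  have h : Q' r t₁ t₂ 1 = (1 - r) * ((t₁ - 1) * (t₂ - 1)) := by unfold Q'; ring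
  rw [h]
  exact mul_nonneg (by linarith) (mul_nonneg (by linarith) (by linarith))

theorem Q'_three_halves_pos (hr : r ≤ 1) (ht₁ : 3 ≤ t₁) (ht : t₁ ≤ t₂) :
    0 < Q' r t₁ t₂ (3 / 2) := by
  set u := t₁ - 3 / 2
  set v := t₂ - 3 / 2
  set w := 3 / 2 - r
  have h : Q' r t₁ t₂ (3 / 2) = (3 / 4 + 2 * w) * (u * v) - 3 / 4 * w * (u + v) := by
    unfold Q' u v w; ring
  rw [h]
  have hu : 3 / 2 ≤ u := by simp only [u]; linarith
  have hv : u ≤ v := by simp only [u, v]; linarith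
  have hw : 1 / 2 ≤ w := by simp only [w]; linarith
  have hw₀ : 0 ≤ w := by linarith
  nlinarith [mul_nonneg hw₀ (mul_nonneg (by linarith : (0 : ℝ) ≤ u - 3 / 2) (by linarith : 0 ≤ v)),
    mul_nonneg hw₀ (mul_nonneg (by linarith : (0 : ℝ) ≤ v - 3 / 2) (by linarith : 0 ≤ u)),
    mul_pos (by linarith : (0 : ℝ) < u) (by linarith : (0 : ℝ) < v)]

theorem Q'_sub_half_nonpos (hr : r ≤ 1) (ht₁ : 3 ≤ t₁) (ht : t₁ ≤ t₂) :
    Q' r t₁ t₂ (t₁ - 1 / 2) ≤ 0 := by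
  -- `Q = k (x - t₁)(x - t₂)` with `k = x (x - r)(x - 1)`, and `k' ≤ 2 k` once `x ≥ 5 / 2`.
  set x := t₁ - 1 / 2
  set k := x * (x - r) * (x - 1)
  set k' := (x - r) * (x - 1) + x * (x - 1) + x * (x - r)
  have h : Q' r t₁ t₂ x = -((1 / 2 + (t₂ - t₁)) * (2 * k - k') / 2) - k / 2 := by
    unfold Q' k k' x; ring
  have hx : 5 / 2 ≤ x := by simp only [x]; linarith
  have hk : 0 ≤ k := by
    have : 0 ≤ x - r := by linarith
    have : 0 ≤ x - 1 := by linarith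
    have : 0 ≤ x := by linarith
    positivity
  have hk' : 0 ≤ 2 * k - k' := by
    have e : 2 * k - k' = (x - r) * (2 * x ^ 2 - 4 * x + 1) - x * (x - 1) := by
      simp only [k, k']; ring
    have hq : 0 ≤ 2 * x ^ 2 - 4 * x + 1 := by nlinarith
    nlinarith [mul_nonneg (by linarith : (0 : ℝ) ≤ 1 - r) hq]
  rw [h]
  have : 0 ≤ (1 / 2 + (t₂ - t₁)) * (2 * k - k') := mul_nonneg (by linarith) hk'
  linarith

theorem Q'_nonpos_at_t₁ (hr : r ≤ 1) (ht₁ : 1 ≤ t₁) (ht : t₁ ≤ t₂) :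
    Q' r t₁ t₂ t₁ ≤ 0 := by
  have h : Q' r t₁ t₂ t₁ = -(t₁ * (t₁ - r) * (t₁ - 1) * (t₂ - t₁)) := by unfold Q'; ring
  rw [h, neg_nonpos]
  have : 0 ≤ t₁ - r := by linarith
  have : 0 ≤ t₁ - 1 := by linarith
  have : 0 ≤ t₂ - t₁ := by linarith
  have : 0 ≤ t₁ := by linarith
  positivity

end SignsOfQ'

section SortedQuartic

variable {a b c d x : ℝ}

theorem mem_Icc_of_quartic_nonpos_of_lt (hab : a ≤ b) (hcd : c ≤ d)
    (h : (x - a) * (x - b) * (x - c) * (x - d) ≤ 0) (hx : x < c) : x ∈ Set.Icc a b := by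
  refine ⟨le_of_not_gt fun hxa => h.not_gt ?_, le_of_not_gt fun hbx => h.not_gt ?_⟩
  · exact mul_pos_of_neg_of_neg (mul_neg_of_pos_of_neg
      (mul_pos_of_neg_of_neg (by linarith) (by linarith)) (by linarith)) (by linarith)
  · exact mul_pos_of_neg_of_neg (mul_neg_of_pos_of_neg
      (mul_pos (by linarith) (by linarith)) (by linarith)) (by linarith)

theorem mem_Icc_of_quartic_nonpos_of_gt (hab : a ≤ b) (hcd : c ≤ d)
    (h : (x - a) * (x - b) * (x - c) * (x - d) ≤ 0) (hx : b < x) : x ∈ Set.Icc c d := by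
  have hneg : (-x - -d) * (-x - -c) * (-x - -b) * (-x - -a) ≤ 0 := by linarith
  obtain ⟨h₁, h₂⟩ :=
    mem_Icc_of_quartic_nonpos_of_lt (neg_le_neg hcd) (neg_le_neg hab) hneg (neg_lt_neg hx)
  exact ⟨by linarith, by linarith⟩

theorem lt_or_mem_Ioo_or_gt_of_quartic_pos (hbc : b ≤ c)
    (h : 0 < (x - a) * (x - b) * (x - c) * (x - d)) : x < a ∨ x ∈ Set.Ioo b c ∨ d < x := by
  by_contra! hx
  obtain ⟨hax, hmid, hxd⟩ := hx
  rcases le_or_gt x b with hxb | hbx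
  · nlinarith [mul_nonneg (mul_nonneg (by linarith : 0 ≤ x - a) (by linarith : 0 ≤ b - x))
      (mul_nonneg (by linarith : 0 ≤ c - x) (by linarith : 0 ≤ d - x))]
  · have hcx : c ≤ x := le_of_not_gt fun hxc => hmid ⟨hbx, hxc⟩
    nlinarith [mul_nonneg (mul_nonneg (by linarith : 0 ≤ x - a) (by linarith : 0 ≤ x - b))
      (mul_nonneg (by linarith : 0 ≤ x - c) (by linarith : 0 ≤ d - x))]

theorem le_of_quartic_nonneg (hcd : c ≤ d)
    (h : 0 ≤ (x - a) * (x - b) * (x - c) * (x - d)) (hax : a < x) (hxc : x < c) : b ≤ x :=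
  le_of_not_gt fun hxb => h.not_gt <| mul_neg_of_pos_of_neg (mul_pos_of_neg_of_neg
    (mul_neg_of_pos_of_neg (by linarith) (by linarith)) (by linarith)) (by linarith)

end SortedQuartic

theorem Q_family_Lplus_general
    (r t₁ t₂ : ℝ) (hr1 : r ≤ 1) (ht₁ : 3 ≤ t₁) (ht : t₁ ≤ t₂)
    (ξ₁ ξ₂ ξ₃ ξ₄ : ℝ) (hξ12 : ξ₁ ≤ ξ₂) (hξ23 : ξ₂ ≤ ξ₃) (hξ34 : ξ₃ ≤ ξ₄)
    (hder : ∀ x : ℝ,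
      deriv (fun t : ℝ => t * (t - r) * (t - 1) * (t - t₁) * (t - t₂)) x
        = 5 * (x - ξ₁) * (x - ξ₂) * (x - ξ₃) * (x - ξ₄))
    (z₁ z₂ z₃ z₄ m mt : ℝ)
    (hz₁ : z₁ = r / 2) (hz₂ : z₂ = (r + 1) / 2)
    (hm : m = min (min (z₂ - z₁) (z₃ - z₂)) (z₄ - z₃))
    (hmt : mt = min (min (ξ₂ - ξ₁) (ξ₃ - ξ₂)) (ξ₄ - ξ₃)) :
    m ≤ mt := by
  have hQ (x : ℝ) : Q' r t₁ t₂ x = 5 * ((x - ξ₁) * (x - ξ₂) * (x - ξ₃) * (x - ξ₄)) := by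
    rw [← (hasDerivAt_Q r t₁ t₂ x).deriv]
    exact (hder x).trans (by ring)
  have nonpos (x : ℝ) (h : Q' r t₁ t₂ x ≤ 0) :
      (x - ξ₁) * (x - ξ₂) * (x - ξ₃) * (x - ξ₄) ≤ 0 := by linarith [hQ x]
  have nonneg (x : ℝ) (h : 0 ≤ Q' r t₁ t₂ x) :
      0 ≤ (x - ξ₁) * (x - ξ₂) * (x - ξ₃) * (x - ξ₄) := by linarith [hQ x]
  have pos (x : ℝ) (h : 0 < Q' r t₁ t₂ x) :
      0 < (x - ξ₁) * (x - ξ₂) * (x - ξ₃) * (x - ξ₄) := by linarith [hQ x]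
  have h_half := nonpos _ (Q'_half_nonpos (by linarith) (by linarith) ht)
  have h_t₁ := nonpos _ (Q'_nonpos_at_t₁ hr1 (by linarith) ht)
  obtain ⟨hξ₂_lt, hξ₃_gt⟩ : ξ₂ < 3 / 2 ∧ 3 / 2 < ξ₃ := by
    rcases lt_or_mem_Ioo_or_gt_of_quartic_pos hξ23
      (pos _ (Q'_three_halves_pos hr1 ht₁ ht)) with h | h | h
    · have := (mem_Icc_of_quartic_nonpos_of_lt hξ12 hξ34 h_half (by linarith)).1
      linarith
    · exact h
    · have := (mem_Icc_of_quartic_nonpos_of_gt hξ12 hξ34 h_t₁ (by linarith)).2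
      linarith
  obtain ⟨hξ₁_upper, -⟩ := mem_Icc_of_quartic_nonpos_of_lt hξ12 hξ34 h_half (by linarith)
  obtain ⟨-, hξ₂_lower⟩ := mem_Icc_of_quartic_nonpos_of_lt hξ12 hξ34
    (nonpos _ (Q'_midpoint_nonpos hr1 ht₁ ht)) (by linarith)
  have hξ₂_upper := le_of_quartic_nonneg hξ34
    (nonneg _ (Q'_one_nonneg hr1 (by linarith) ht)) (by linarith) (by linarith)
  obtain ⟨hξ₃_upper, -⟩ := mem_Icc_of_quartic_nonpos_of_gt hξ12 hξ34
    (nonpos _ (Q'_sub_half_nonpos hr1 ht₁ ht)) (by linarith)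
  obtain ⟨-, hξ₄_lower⟩ := mem_Icc_of_quartic_nonpos_of_gt hξ12 hξ34 h_t₁ (by linarith)
  rw [hm, hmt, hz₁, hz₂]
  refine (min_le_left _ _).trans <| (min_le_left _ _).trans <| le_min (le_min ?_ ?_) ?_ <;> linarith

/-- For `Q(x) = x(x-r)(x-1)(x-t₁)(x-t₂)` with `0 ≤ r ≤ 1` and `3 ≤ t₁ ≤ t₂`, the case L+
holds: `m ≤ m̃`, where `m` is the minimum of the distances between consecutive midpoints
of `Q` and `m̃` is the minimum of the distances between consecutive roots of `Q'`. -/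
theorem Q_family_Lplus
    (r t₁ t₂ : ℝ) (hr0 : 0 ≤ r) (hr1 : r ≤ 1) (ht₁ : 3 ≤ t₁) (ht : t₁ ≤ t₂)
    (ξ₁ ξ₂ ξ₃ ξ₄ : ℝ) (hξ12 : ξ₁ ≤ ξ₂) (hξ23 : ξ₂ ≤ ξ₃) (hξ34 : ξ₃ ≤ ξ₄)
    (hder : ∀ x : ℝ,
      deriv (fun t : ℝ => t * (t - r) * (t - 1) * (t - t₁) * (t - t₂)) x
        = 5 * (x - ξ₁) * (x - ξ₂) * (x - ξ₃) * (x - ξ₄))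
    (z₁ z₂ z₃ z₄ m mt : ℝ)
    (hz₁ : z₁ = r / 2) (hz₂ : z₂ = (r + 1) / 2)
    (hz₃ : z₃ = (1 + t₁) / 2) (hz₄ : z₄ = (t₁ + t₂) / 2)
    (hm : m = min (min (z₂ - z₁) (z₃ - z₂)) (z₄ - z₃))
    (hmt : mt = min (min (ξ₂ - ξ₁) (ξ₃ - ξ₂)) (ξ₄ - ξ₃)) :
    m ≤ mt :=
  Q_family_Lplus_general r t₁ t₂ hr1 ht₁ ht ξ₁ ξ₂ ξ₃ ξ₄ hξ12 hξ23 hξ34 hder z₁ z₂ z₃ z₄ m mt hz₁ hz₂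
    hm hmt
end

section
/- Under the hypotheses of the F-family, if in addition b > 0 and c ≥ 3b, then m ≤ m̃ (the case L+ holds); consequently the case L−R+ (m > m̃ and M̃ ≤ M) is not realizable by F when c ≥ 3b. -/
/-!
Writing `d` for the root `1`, the critical points of `F(x) = x(x-a)(x-b)(x-c)(x-d)` are pinned
down by the signs of `F'` at `a/2`, `(a+b)/2`, `b`, `(b+c)/2`, `(c+d-b)/2` and `(c+d)/2`:
`ξ₁ ≤ a/2`, `(a+b)/2 ≤ ξ₂ ≤ b`, `(b+c)/2 ≤ ξ₃ ≤ (c+d-b)/2` and `(c+d)/2 ≤ ξ₄`.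
Apart from `F'(b) = b(b-a)(b-c)(b-d) ≥ 0`, when `c ≥ 3b` these signs are visible after writing
`b = a + q`, `c = 3b + r`, `d = c + t` with `q, r, t ≥ 0`: `F'` at each other point becomes a
polynomial in `a, q, r, t` whose coefficients all have the same sign.
Hence every gap `ξᵢ₊₁ - ξᵢ` is at least `b/2 = z₂ - z₁ ≥ m`.
-/

def quinticDeriv (a b c d x : ℝ) : ℝ :=
  (x - a) * (x - b) * (x - c) * (x - d) + x * (x - b) * (x - c) * (x - d)
    + x * (x - a) * (x - c) * (x - d) + x * (x - a) * (x - b) * (x - d)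
    + x * (x - a) * (x - b) * (x - c)

theorem hasDerivAt_quintic (a b c d x : ℝ) :
    HasDerivAt (fun t : ℝ => t * (t - a) * (t - b) * (t - c) * (t - d))
      (quinticDeriv a b c d x) x := by
  have h := ((((hasDerivAt_id x).mul ((hasDerivAt_id x).sub_const a)).mul
    ((hasDerivAt_id x).sub_const b)).mul ((hasDerivAt_id x).sub_const c)).mul
    ((hasDerivAt_id x).sub_const d)
  refine h.congr_deriv ?_
  simp only [Pi.mul_apply, id_eq, quinticDeriv]
  ring

section QuarticSign

variable {ξ₁ ξ₂ ξ₃ ξ₄ x : ℝ}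

theorem quartic_pos_of_lt_first (h₁₂ : ξ₁ ≤ ξ₂) (h₂₃ : ξ₂ ≤ ξ₃) (h₃₄ : ξ₃ ≤ ξ₄) (hx : x < ξ₁) :
    0 < (x - ξ₁) * (x - ξ₂) * (x - ξ₃) * (x - ξ₄) :=
  mul_pos_of_neg_of_neg
    (mul_neg_of_pos_of_neg (mul_pos_of_neg_of_neg (by linarith) (by linarith)) (by linarith))
    (by linarith)

theorem quartic_neg_of_mem_Ioo_first_second (h₂₃ : ξ₂ ≤ ξ₃) (h₃₄ : ξ₃ ≤ ξ₄)
    (hx₁ : ξ₁ < x) (hx₂ : x < ξ₂) :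
    (x - ξ₁) * (x - ξ₂) * (x - ξ₃) * (x - ξ₄) < 0 :=
  mul_neg_of_pos_of_neg
    (mul_pos_of_neg_of_neg (mul_neg_of_pos_of_neg (by linarith) (by linarith)) (by linarith))
    (by linarith)

theorem quartic_pos_of_mem_Ioo_second_third (h₁₂ : ξ₁ ≤ ξ₂) (h₃₄ : ξ₃ ≤ ξ₄)
    (hx₂ : ξ₂ < x) (hx₃ : x < ξ₃) :
    0 < (x - ξ₁) * (x - ξ₂) * (x - ξ₃) * (x - ξ₄) :=
  mul_pos_of_neg_of_neg
    (mul_neg_of_pos_of_neg (mul_pos (by linarith) (by linarith)) (by linarith)) (by linarith)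

theorem quartic_neg_of_mem_Ioo_third_fourth (h₁₂ : ξ₁ ≤ ξ₂) (h₂₃ : ξ₂ ≤ ξ₃)
    (hx₃ : ξ₃ < x) (hx₄ : x < ξ₄) :
    (x - ξ₁) * (x - ξ₂) * (x - ξ₃) * (x - ξ₄) < 0 :=
  mul_neg_of_pos_of_neg
    (mul_pos (mul_pos (by linarith) (by linarith)) (by linarith)) (by linarith)

theorem quartic_pos_of_last_lt (h₁₂ : ξ₁ ≤ ξ₂) (h₂₃ : ξ₂ ≤ ξ₃) (h₃₄ : ξ₃ ≤ ξ₄) (hx : ξ₄ < x) :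
    0 < (x - ξ₁) * (x - ξ₂) * (x - ξ₃) * (x - ξ₄) :=
  mul_pos (mul_pos (mul_pos (by linarith) (by linarith)) (by linarith)) (by linarith)

end QuarticSign

theorem of_nonneg_increments {P : ℝ → ℝ → ℝ → ℝ → Prop}
    (h : ∀ a q r t : ℝ, 0 ≤ a → 0 ≤ q → 0 ≤ r → 0 ≤ t →
      P a (a + q) (3 * (a + q) + r) (3 * (a + q) + r + t))
    {a b c d : ℝ} (ha : 0 ≤ a) (hab : a ≤ b) (hc : 3 * b ≤ c) (hcd : c ≤ d) : P a b c d := by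
  simpa only [add_sub_cancel] using
    h a (b - a) (c - 3 * b) (d - c) ha (by linarith) (by linarith) (by linarith)

section QuinticDerivSign

variable {a b c d : ℝ}

theorem quinticDeriv_half_left_nonpos (ha : 0 ≤ a) (hab : a ≤ b) (hc : 3 * b ≤ c) (hcd : c ≤ d) :
    quinticDeriv a b c d (a / 2) ≤ 0 := by
  refine of_nonneg_increments (P := fun a b c d => quinticDeriv a b c d (a / 2) ≤ 0)
    (fun a q r t ha hq hr ht => ?_) ha hab hc hcd
  rw [← neg_nonneg]
  unfold quinticDeriv
  ring_nf
  positivity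

theorem quinticDeriv_mid_ab_nonpos (ha : 0 ≤ a) (hab : a ≤ b) (hc : 3 * b ≤ c) (hcd : c ≤ d) :
    quinticDeriv a b c d ((a + b) / 2) ≤ 0 := by
  refine of_nonneg_increments (P := fun a b c d => quinticDeriv a b c d ((a + b) / 2) ≤ 0)
    (fun a q r t ha hq hr ht => ?_) ha hab hc hcd
  rw [← neg_nonneg]
  unfold quinticDeriv
  ring_nf
  positivity

theorem quinticDeriv_at_b_nonneg (hb : 0 ≤ b) (hab : a ≤ b) (hbc : b ≤ c) (hcd : c ≤ d) :
    0 ≤ quinticDeriv a b c d b := by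
  have hval : quinticDeriv a b c d b = b * (b - a) * (c - b) * (d - b) := by
    unfold quinticDeriv
    ring
  rw [hval]
  exact mul_nonneg (mul_nonneg (mul_nonneg hb (sub_nonneg.2 hab)) (sub_nonneg.2 hbc))
    (sub_nonneg.2 (hbc.trans hcd))

theorem quinticDeriv_mid_bc_nonneg (ha : 0 ≤ a) (hab : a ≤ b) (hc : 3 * b ≤ c) (hcd : c ≤ d) :
    0 ≤ quinticDeriv a b c d ((b + c) / 2) := by
  refine of_nonneg_increments (P := fun a b c d => 0 ≤ quinticDeriv a b c d ((b + c) / 2))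
    (fun a q r t ha hq hr ht => ?_) ha hab hc hcd
  unfold quinticDeriv
  ring_nf
  positivity

theorem quinticDeriv_sub_left_nonpos (ha : 0 ≤ a) (hab : a ≤ b) (hc : 3 * b ≤ c) (hcd : c ≤ d) :
    quinticDeriv a b c d ((c + d - b) / 2) ≤ 0 := by
  refine of_nonneg_increments (P := fun a b c d => quinticDeriv a b c d ((c + d - b) / 2) ≤ 0)
    (fun a q r t ha hq hr ht => ?_) ha hab hc hcd
  rw [← neg_nonneg]
  unfold quinticDeriv
  ring_nf
  positivity

theorem quinticDeriv_mid_cd_nonpos (ha : 0 ≤ a) (hab : a ≤ b) (hc : 3 * b ≤ c) (hcd : c ≤ d) :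
    quinticDeriv a b c d ((c + d) / 2) ≤ 0 := by
  refine of_nonneg_increments (P := fun a b c d => quinticDeriv a b c d ((c + d) / 2) ≤ 0)
    (fun a q r t ha hq hr ht => ?_) ha hab hc hcd
  rw [← neg_nonneg]
  unfold quinticDeriv
  ring_nf
  positivity

end QuinticDerivSign

section CriticalPoints

variable {a b c d ξ₁ ξ₂ ξ₃ ξ₄ : ℝ}

theorem critical_points_bounds (ha : 0 ≤ a) (hab : a ≤ b) (hb : 0 < b) (hc : 3 * b ≤ c)
    (hcd : c ≤ d) (h₁₂ : ξ₁ ≤ ξ₂) (h₂₃ : ξ₂ ≤ ξ₃) (h₃₄ : ξ₃ ≤ ξ₄)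
    (hroots : ∀ x, quinticDeriv a b c d x = 5 * ((x - ξ₁) * (x - ξ₂) * (x - ξ₃) * (x - ξ₄))) :
    ξ₁ ≤ a / 2 ∧ (a + b) / 2 ≤ ξ₂ ∧ ξ₂ ≤ b ∧ (b + c) / 2 ≤ ξ₃ ∧ ξ₃ ≤ (c + d - b) / 2 ∧
      (c + d) / 2 ≤ ξ₄ := by
  have h₁ : ξ₁ ≤ a / 2 := not_lt.1 fun hx => by
    linarith [hroots (a / 2), quinticDeriv_half_left_nonpos ha hab hc hcd,
      quartic_pos_of_lt_first h₁₂ h₂₃ h₃₄ hx]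
  have h₄ : (c + d) / 2 ≤ ξ₄ := not_lt.1 fun hx => by
    linarith [hroots ((c + d) / 2), quinticDeriv_mid_cd_nonpos ha hab hc hcd,
      quartic_pos_of_last_lt h₁₂ h₂₃ h₃₄ hx]
  have h₃ : (b + c) / 2 ≤ ξ₃ := not_lt.1 fun hx => by
    linarith [hroots ((b + c) / 2), quinticDeriv_mid_bc_nonneg ha hab hc hcd,
      quartic_neg_of_mem_Ioo_third_fourth h₁₂ h₂₃ hx (by linarith : (b + c) / 2 < ξ₄)]
  have h₂ : (a + b) / 2 ≤ ξ₂ := not_lt.1 fun hx => by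
    linarith [hroots ((a + b) / 2), quinticDeriv_mid_ab_nonpos ha hab hc hcd,
      quartic_pos_of_mem_Ioo_second_third h₁₂ h₃₄ hx (by linarith : (a + b) / 2 < ξ₃)]
  have h₂' : ξ₂ ≤ b := not_lt.1 fun hx => by
    linarith [hroots b, quinticDeriv_at_b_nonneg hb.le hab (by linarith) hcd,
      quartic_neg_of_mem_Ioo_first_second h₂₃ h₃₄ (by linarith : ξ₁ < b) hx]
  have h₃' : ξ₃ ≤ (c + d - b) / 2 := not_lt.1 fun hx => by
    linarith [hroots ((c + d - b) / 2), quinticDeriv_sub_left_nonpos ha hab hc hcd,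
      quartic_pos_of_mem_Ioo_second_third h₁₂ h₃₄ (by linarith : ξ₂ < (c + d - b) / 2) hx]
  exact ⟨h₁, h₂, h₂', h₃, h₃', h₄⟩

theorem half_le_critical_point_gaps (ha : 0 ≤ a) (hab : a ≤ b) (hb : 0 < b) (hc : 3 * b ≤ c)
    (hcd : c ≤ d) (h₁₂ : ξ₁ ≤ ξ₂) (h₂₃ : ξ₂ ≤ ξ₃) (h₃₄ : ξ₃ ≤ ξ₄)
    (hroots : ∀ x, quinticDeriv a b c d x = 5 * ((x - ξ₁) * (x - ξ₂) * (x - ξ₃) * (x - ξ₄))) :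
    b / 2 ≤ ξ₂ - ξ₁ ∧ b / 2 ≤ ξ₃ - ξ₂ ∧ b / 2 ≤ ξ₄ - ξ₃ := by
  obtain ⟨h₁, h₂, h₂', h₃, h₃', h₄⟩ :=
    critical_points_bounds ha hab hb hc hcd h₁₂ h₂₃ h₃₄ hroots
  exact ⟨by linarith, by linarith, by linarith⟩

end CriticalPoints

theorem F_family_c_ge_3b_Lplus_general
    (a b c : ℝ) (ha : 0 ≤ a) (hab : a ≤ b) (hc1 : c ≤ 1)
    (hb0 : 0 < b) (hc3b : 3 * b ≤ c)
    (ξ₁ ξ₂ ξ₃ ξ₄ : ℝ) (hξ12 : ξ₁ ≤ ξ₂) (hξ23 : ξ₂ ≤ ξ₃) (hξ34 : ξ₃ ≤ ξ₄)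
    (hder : ∀ x : ℝ,
      deriv (fun t : ℝ => t * (t - a) * (t - b) * (t - c) * (t - 1)) x
        = 5 * (x - ξ₁) * (x - ξ₂) * (x - ξ₃) * (x - ξ₄))
    (z₁ z₂ z₃ z₄ m M mt Mt : ℝ)
    (hz₁ : z₁ = a / 2) (hz₂ : z₂ = (a + b) / 2)
    (hm : m = min (min (z₂ - z₁) (z₃ - z₂)) (z₄ - z₃))
    (hmt : mt = min (min (ξ₂ - ξ₁) (ξ₃ - ξ₂)) (ξ₄ - ξ₃)) :
    m ≤ mt ∧ ¬ (mt < m ∧ Mt ≤ M) := by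
  have hroots (x : ℝ) : quinticDeriv a b c 1 x =
      5 * ((x - ξ₁) * (x - ξ₂) * (x - ξ₃) * (x - ξ₄)) := by
    rw [← (hasDerivAt_quintic a b c 1 x).deriv, hder x]
    ring
  obtain ⟨g₁, g₂, g₃⟩ :=
    half_le_critical_point_gaps ha hab hb0 hc3b hc1 hξ12 hξ23 hξ34 hroots
  have hm_le : m ≤ b / 2 := by
    rw [hm, hz₁, hz₂]
    exact (min_le_left _ _).trans ((min_le_left _ _).trans (by linarith))
  have hmt_ge : b / 2 ≤ mt := hmt ▸ le_min (le_min g₁ g₂) g₃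
  have hLplus : m ≤ mt := hm_le.trans hmt_ge
  exact ⟨hLplus, fun h => h.1.not_ge hLplus⟩

/-- For `F(x) = x(x-a)(x-b)(x-c)(x-1)` with `0 ≤ a ≤ b ≤ c ≤ 1`, `b > 0` and `c ≥ 3b`,
the case L+ holds: `m ≤ m̃`; consequently the case L−R+ is not realizable by `F`. -/
theorem F_family_c_ge_3b_Lplus
    (a b c : ℝ) (ha : 0 ≤ a) (hab : a ≤ b) (hbc : b ≤ c) (hc1 : c ≤ 1)
    (hb0 : 0 < b) (hc3b : 3 * b ≤ c)
    (ξ₁ ξ₂ ξ₃ ξ₄ : ℝ) (hξ12 : ξ₁ ≤ ξ₂) (hξ23 : ξ₂ ≤ ξ₃) (hξ34 : ξ₃ ≤ ξ₄)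
    (hder : ∀ x : ℝ,
      deriv (fun t : ℝ => t * (t - a) * (t - b) * (t - c) * (t - 1)) x
        = 5 * (x - ξ₁) * (x - ξ₂) * (x - ξ₃) * (x - ξ₄))
    (z₁ z₂ z₃ z₄ m M mt Mt : ℝ)
    (hz₁ : z₁ = a / 2) (hz₂ : z₂ = (a + b) / 2)
    (hz₃ : z₃ = (b + c) / 2) (hz₄ : z₄ = (c + 1) / 2)
    (hm : m = min (min (z₂ - z₁) (z₃ - z₂)) (z₄ - z₃))
    (hM : M = max (max (z₂ - z₁) (z₃ - z₂)) (z₄ - z₃))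
    (hmt : mt = min (min (ξ₂ - ξ₁) (ξ₃ - ξ₂)) (ξ₄ - ξ₃))
    (hMt : Mt = max (max (ξ₂ - ξ₁) (ξ₃ - ξ₂)) (ξ₄ - ξ₃)) :
    m ≤ mt ∧ ¬ (mt < m ∧ Mt ≤ M) :=
  F_family_c_ge_3b_Lplus_general a b c ha hab hc1 hb0 hc3b ξ₁ ξ₂ ξ₃ ξ₄ hξ12 hξ23 hξ34 hder z₁ z₂ z₃
    z₄ m M mt Mt hz₁ hz₂ hm hmt
end

section
/- Let Q(x) = x(x−r)(x−1)(x−t₁)(x−t₂) with 0 ≤ r ≤ 1 and 3 ≤ t₁ ≤ t₂, and let ξ₁ ≤ ξ₂ ≤ ξ₃ ≤ ξ₄ be the roots of Q′ counted with multiplicity. Then ξ₂ − ξ₁ > 1/2. -/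
lemma deriv_Q (r t₁ t₂ x : ℝ) :
    deriv (fun t : ℝ => t * (t - r) * (t - 1) * (t - t₁) * (t - t₂)) x
      = (x-r)*(x-1)*(x-t₁)*(x-t₂) + x*(x-1)*(x-t₁)*(x-t₂) + x*(x-r)*(x-t₁)*(x-t₂)
        + x*(x-r)*(x-1)*(x-t₂) + x*(x-r)*(x-1)*(x-t₁) := by
  have h : HasDerivAt (fun t : ℝ => t * (t - r) * (t - 1) * (t - t₁) * (t - t₂))
      ((((1*(x-r) + x*1)*(x-1) + x*(x-r)*1)*(x-t₁) + x*(x-r)*(x-1)*1)*(x-t₂)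
        + x*(x-r)*(x-1)*(x-t₁)*1) x :=
    ((((hasDerivAt_id x).mul ((hasDerivAt_id x).sub_const r)).mul
      ((hasDerivAt_id x).sub_const 1)).mul ((hasDerivAt_id x).sub_const t₁)).mul
      ((hasDerivAt_id x).sub_const t₂)
  rw [h.deriv]; ring

lemma key_neg (r t₁ t₂ x : ℝ) (ht₁ : 3 ≤ t₁) (ht : t₁ ≤ t₂)
    (hx2 : x ≤ 1)
    (hC' : 3*x^2 - 2*(1+r)*x + r < 0)
    (hB : (3*x^2 - 2*(1+r)*x + r)*(3-x) < 2*(x*(x-r)*(x-1))) :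
    (x-r)*(x-1)*(x-t₁)*(x-t₂) + x*(x-1)*(x-t₁)*(x-t₂) + x*(x-r)*(x-t₁)*(x-t₂)
      + x*(x-r)*(x-1)*(x-t₂) + x*(x-r)*(x-1)*(x-t₁) < 0 := by
  set C := x*(x-r)*(x-1) with hCdef
  set C' := 3*x^2 - 2*(1+r)*x + r with hC'def
  set u := t₁ - x with hu
  set v := t₂ - x with hv
  set w := (3:ℝ) - x with hw
  have hwu : w ≤ u := by simp [hu, hw]; linarith
  have huv : u ≤ v := by simp [hu, hv]; linarith
  have hw0 : 0 < w := by simp [hw]; linarith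
  have hCw : C'*w - C < 0 := by
    rcases le_total 0 C with h | h
    · nlinarith
    · nlinarith
  have hCu : C'*u - C < 0 := by nlinarith
  have h1 : (v - w)*(C - C'*u) ≥ 0 := mul_nonneg (by linarith) (by linarith)
  have h2 : (u - w)*(C - C'*w) ≥ 0 := mul_nonneg (by linarith) (by linarith)
  have h3 : w*(2*C - C'*w) > 0 := mul_pos hw0 (by linarith)
  have hD : (x-r)*(x-1)*(x-t₁)*(x-t₂) + x*(x-1)*(x-t₁)*(x-t₂) + x*(x-r)*(x-t₁)*(x-t₂)
      + x*(x-r)*(x-1)*(x-t₂) + x*(x-r)*(x-1)*(x-t₁)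
      = C'*u*v - C*(u+v) := by
    simp only [hCdef, hC'def, hu, hv]; ring
  rw [hD]
  nlinarith [h1, h2, h3]

/-- For `Q(x) = x(x-r)(x-1)(x-t₁)(x-t₂)` with `0 ≤ r ≤ 1` and `3 ≤ t₁ ≤ t₂`, the two
smallest roots `ξ₁ ≤ ξ₂` of `Q'` satisfy `ξ₂ - ξ₁ > 1/2`. -/
theorem Q_family_xi2_sub_xi1
    (r t₁ t₂ : ℝ) (hr0 : 0 ≤ r) (hr1 : r ≤ 1) (ht₁ : 3 ≤ t₁) (ht : t₁ ≤ t₂)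
    (ξ₁ ξ₂ ξ₃ ξ₄ : ℝ) (hξ12 : ξ₁ ≤ ξ₂) (hξ23 : ξ₂ ≤ ξ₃) (hξ34 : ξ₃ ≤ ξ₄)
    (hder : ∀ x : ℝ,
      deriv (fun t : ℝ => t * (t - r) * (t - 1) * (t - t₁) * (t - t₂)) x
        = 5 * (x - ξ₁) * (x - ξ₂) * (x - ξ₃) * (x - ξ₄)) :
    ξ₂ - ξ₁ > 1 / 2 := by
  have hcont : Continuous (fun t : ℝ => t * (t - r) * (t - 1) * (t - t₁) * (t - t₂)) := by
    fun_prop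
  -- Step 1 : ξ₃ > 1
  have hx3 : 1 < ξ₃ := by
    obtain ⟨c, hc, hc0⟩ := exists_deriv_eq_zero (show (1:ℝ) < t₁ by linarith)
      hcont.continuousOn (by norm_num)
    have hcroot : 5 * (c - ξ₁) * (c - ξ₂) * (c - ξ₃) * (c - ξ₄) = 0 := by
      rw [← hder c, hc0]
    obtain ⟨d, hd1, hdroot⟩ : ∃ d : ℝ, t₁ ≤ d ∧
        5 * (d - ξ₁) * (d - ξ₂) * (d - ξ₃) * (d - ξ₄) = 0 := by
      rcases eq_or_lt_of_le ht with heq | hlt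
      · refine ⟨t₁, le_refl _, ?_⟩
        rw [← hder t₁, deriv_Q, ← heq]; ring
      · obtain ⟨d, hd, hd0⟩ := exists_deriv_eq_zero hlt hcont.continuousOn (by simp)
        exact ⟨d, le_of_lt hd.1, by rw [← hder d, hd0]⟩
    by_contra h
    push_neg at h
    have hc1 : 1 < c := hc.1
    have hct : c < t₁ := hc.2
    have hc4 : c = ξ₄ := by
      have h1 : 0 < c - ξ₁ := by linarith
      have h2 : 0 < c - ξ₂ := by linarith
      have h3 : 0 < c - ξ₃ := by linarith
      have : c - ξ₄ = 0 := by
        by_contra h4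
        have := mul_ne_zero (mul_ne_zero (mul_ne_zero (mul_ne_zero
          (by norm_num : (5:ℝ) ≠ 0) (ne_of_gt h1)) (ne_of_gt h2)) (ne_of_gt h3)) h4
        exact this hcroot
      linarith
    have hd4 : d = ξ₄ := by
      have h1 : 0 < d - ξ₁ := by linarith
      have h2 : 0 < d - ξ₂ := by linarith
      have h3 : 0 < d - ξ₃ := by linarith
      have : d - ξ₄ = 0 := by
        by_contra h4
        have := mul_ne_zero (mul_ne_zero (mul_ne_zero (mul_ne_zero
          (by norm_num : (5:ℝ) ≠ 0) (ne_of_gt h1)) (ne_of_gt h2)) (ne_of_gt h3)) h4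
        exact this hdroot
      linarith
    linarith [hc4, hd4]
  -- Step 2 : Q' is negative at x₁ = 7/100 + 3r/10 and x₂ = x₁ + 1/2
  have hgen : ∀ x : ℝ, x ≤ 1 →
      (3*x^2 - 2*(1+r)*x + r < 0) →
      ((3*x^2 - 2*(1+r)*x + r)*(3-x) < 2*(x*(x-r)*(x-1))) →
      ξ₁ < x ∧ x < ξ₂ := by
    intro x hxle hC' hB
    have hneg : 5 * (x - ξ₁) * (x - ξ₂) * (x - ξ₃) * (x - ξ₄) < 0 := by
      rw [← hder x, deriv_Q]
      exact key_neg r t₁ t₂ x ht₁ ht hxle hC' hB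
    have h34 : 0 < (x - ξ₃) * (x - ξ₄) := by nlinarith
    have h12 : (x - ξ₁) * (x - ξ₂) < 0 := by nlinarith
    constructor
    · nlinarith
    · nlinarith
  have hP1 := hgen (7/100 + 3*r/10) (by linarith)
    (by nlinarith [sq_nonneg (r - 585/1000)])
    (by nlinarith [sq_nonneg (r - 1/2), mul_nonneg hr0 (sub_nonneg.2 hr1), sq_nonneg r,
        sq_nonneg (1-r), mul_nonneg (mul_nonneg hr0 hr0) (sub_nonneg.2 hr1)])
  have hP2 := hgen (57/100 + 3*r/10) (by linarith)
    (by nlinarith [sq_nonneg (r - 433/1000)])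
    (by nlinarith [sq_nonneg (r - 1/2), mul_nonneg hr0 (sub_nonneg.2 hr1), sq_nonneg r,
        sq_nonneg (1-r), mul_nonneg (mul_nonneg hr0 hr0) (sub_nonneg.2 hr1)])
  linarith [hP1.1, hP2.2]
end

section
/- Let Q(x) = x(x−r)(x−1)(x−t₁)(x−t₂) with 0 ≤ r ≤ 1 and 3 ≤ t₁ ≤ t₂, and let ξ₁ ≤ ξ₂ ≤ ξ₃ ≤ ξ₄ be the roots of Q′ counted with multiplicity. Then ξ₃ − ξ₂ > ξ₂ − ξ₁. -/
/-!
Write `Q = g · (x - t₁)(x - t₂)` with `g = x(x - r)(x - 1)`, so that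
`Q' = g' · (x - t₁)(x - t₂) + g · (2x - t₁ - t₂)`. Since `Q' = 5 ∏ (x - ξᵢ)`, the sign of `Q'` at a
point locates it among the sorted roots: `Q' > 0` on `(-∞, 0)`, `Q'(r/2) ≤ 0`, `Q'((2+r)/3) ≥ 0` and
`Q'(t₁) ≤ 0` give `0 ≤ ξ₁ ≤ r/2`, `ξ₂ ≤ (2+r)/3` and `t₁ ≤ ξ₄`.
For `t₁, t₂ ≥ 3 > x` the quotient `Q'(x) / ((t₁ - x)(t₂ - x)) = g'(x) - g(x) (1/(t₁-x) + 1/(t₂-x))`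
is smallest at `t₁ = t₂ = 3`, so `Q'(B) > 0` at `B = 2(2+r)/3 + 1/10` reduces to a cubic inequality in
`r`, and then `ξ₃ ≥ B`. Hence `ξ₃ - ξ₂ ≥ (2+r)/3 + 1/10 > ξ₂ - ξ₁`.
-/

def rootProduct (ξ₁ ξ₂ ξ₃ ξ₄ x : ℝ) : ℝ := (x - ξ₁) * (x - ξ₂) * (x - ξ₃) * (x - ξ₄)

section SortedRoots

variable {ξ₁ ξ₂ ξ₃ ξ₄ x : ℝ}

theorem root₁_le_of_rootProduct_nonpos (h₁₂ : ξ₁ ≤ ξ₂) (h₂₃ : ξ₂ ≤ ξ₃) (h₃₄ : ξ₃ ≤ ξ₄)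
    (h : rootProduct ξ₁ ξ₂ ξ₃ ξ₄ x ≤ 0) : ξ₁ ≤ x := by
  by_contra! hx
  refine h.not_gt (mul_pos_of_neg_of_neg (mul_neg_of_pos_of_neg
    (mul_pos_of_neg_of_neg ?_ ?_) ?_) ?_) <;> linarith

theorem root₂_le_of_rootProduct_nonneg (h₂₃ : ξ₂ ≤ ξ₃) (h₃₄ : ξ₃ ≤ ξ₄) (h₁ : ξ₁ < x)
    (h : 0 ≤ rootProduct ξ₁ ξ₂ ξ₃ ξ₄ x) : ξ₂ ≤ x := by
  by_contra! hx
  refine h.not_gt (mul_neg_of_pos_of_neg (mul_pos_of_neg_of_neg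
    (mul_neg_of_pos_of_neg ?_ ?_) ?_) ?_) <;> linarith

theorem le_root₃_of_rootProduct_pos (h₁₂ : ξ₁ ≤ ξ₂) (h₂₃ : ξ₂ ≤ ξ₃) (h₄ : x ≤ ξ₄)
    (h : 0 < rootProduct ξ₁ ξ₂ ξ₃ ξ₄ x) : x ≤ ξ₃ := by
  by_contra! hx
  refine h.not_ge (mul_nonpos_of_nonneg_of_nonpos (mul_pos (mul_pos ?_ ?_) ?_).le ?_) <;> linarith

theorem le_root₄_of_rootProduct_nonpos (h₁₂ : ξ₁ ≤ ξ₂) (h₂₃ : ξ₂ ≤ ξ₃) (h₃₄ : ξ₃ ≤ ξ₄)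
    (h : rootProduct ξ₁ ξ₂ ξ₃ ξ₄ x ≤ 0) : x ≤ ξ₄ := by
  by_contra! hx
  refine h.not_gt (mul_pos (mul_pos (mul_pos ?_ ?_) ?_) ?_) <;> linarith

end SortedRoots

def cubic (r x : ℝ) : ℝ := x * (x - r) * (x - 1)

def cubicDeriv (r x : ℝ) : ℝ := 3 * x ^ 2 - 2 * (1 + r) * x + r

noncomputable def rootTwoBound (r : ℝ) : ℝ := (2 + r) / 3

noncomputable def rootThreeBound (r : ℝ) : ℝ := 2 * rootTwoBound r + 1 / 10

def Qderiv (r t₁ t₂ x : ℝ) : ℝ :=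
  cubicDeriv r x * ((x - t₁) * (x - t₂)) + cubic r x * (2 * x - t₁ - t₂)

theorem hasDerivAt_Q_s9 (r t₁ t₂ x : ℝ) :
    HasDerivAt (fun t : ℝ => t * (t - r) * (t - 1) * (t - t₁) * (t - t₂)) (Qderiv r t₁ t₂ x) x := by
  have hid := hasDerivAt_id' (x := x)
  refine ((((hid.mul (hid.sub_const r)).mul (hid.sub_const 1)).mul (hid.sub_const t₁)).mul
    (hid.sub_const t₂)).congr_deriv ?_
  simp only [Qderiv, cubic, cubicDeriv, Pi.mul_apply]
  ring

section Signs

variable {r t₁ t₂ x : ℝ}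

theorem Qderiv_nonneg_of_cubic (hd : 0 ≤ cubicDeriv r x) (hc : cubic r x ≤ 0)
    (h₁ : x ≤ t₁) (h₂ : x ≤ t₂) : 0 ≤ Qderiv r t₁ t₂ x := by
  unfold Qderiv
  have hprod : 0 ≤ (x - t₁) * (x - t₂) :=
    mul_nonneg_of_nonpos_of_nonpos (by linarith) (by linarith)
  have hsum : 2 * x - t₁ - t₂ ≤ 0 := by linarith
  nlinarith [mul_nonneg hd hprod, mul_nonneg_of_nonpos_of_nonpos hc hsum]

theorem Qderiv_nonpos_of_cubic (hd : cubicDeriv r x ≤ 0) (hc : 0 ≤ cubic r x)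
    (h₁ : x ≤ t₁) (h₂ : x ≤ t₂) : Qderiv r t₁ t₂ x ≤ 0 := by
  unfold Qderiv
  have hprod : 0 ≤ (x - t₁) * (x - t₂) :=
    mul_nonneg_of_nonpos_of_nonpos (by linarith) (by linarith)
  have hsum : 2 * x - t₁ - t₂ ≤ 0 := by linarith
  nlinarith [mul_nonpos_of_nonpos_of_nonneg hd hprod, mul_nonpos_of_nonneg_of_nonpos hc hsum]

theorem Qderiv_pos_of_neg (hr : 0 ≤ r) (h₁ : 0 ≤ t₁) (h₂ : 0 ≤ t₂) (hx : x < 0) :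
    0 < Qderiv r t₁ t₂ x := by
  have hd : 0 < cubicDeriv r x := by unfold cubicDeriv; nlinarith
  have hc : cubic r x < 0 :=
    mul_neg_of_pos_of_neg (mul_pos_of_neg_of_neg hx (by linarith)) (by linarith)
  have hprod : 0 < (x - t₁) * (x - t₂) := mul_pos_of_neg_of_neg (by linarith) (by linarith)
  have hsum : 2 * x - t₁ - t₂ < 0 := by linarith
  unfold Qderiv
  nlinarith [mul_pos hd hprod, mul_pos_of_neg_of_neg hc hsum]

theorem Qderiv_half_nonpos (hr : r ≤ 2) (h₁ : r / 2 ≤ t₁) (h₂ : r / 2 ≤ t₂) :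
    Qderiv r t₁ t₂ (r / 2) ≤ 0 := by
  refine Qderiv_nonpos_of_cubic ?_ ?_ h₁ h₂
  · have : cubicDeriv r (r / 2) = -(r ^ 2 / 4) := by unfold cubicDeriv; ring
    rw [this, neg_nonpos]
    positivity
  · have : cubic r (r / 2) = r ^ 2 * (2 - r) / 8 := by unfold cubic; ring
    rw [this]
    have : 0 ≤ 2 - r := by linarith
    positivity

theorem Qderiv_rootTwoBound_nonneg (hr0 : 0 ≤ r) (hr1 : r ≤ 1) (h₁ : 1 ≤ t₁) (h₂ : 1 ≤ t₂) :
    0 ≤ Qderiv r t₁ t₂ (rootTwoBound r) := by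
  have hB : rootTwoBound r ≤ 1 := by unfold rootTwoBound; linarith
  refine Qderiv_nonneg_of_cubic ?_ ?_ (hB.trans h₁) (hB.trans h₂)
  · have : cubicDeriv r (rootTwoBound r) = r * (1 - r) / 3 := by
      unfold cubicDeriv rootTwoBound; ring
    rw [this]
    have : 0 ≤ 1 - r := by linarith
    positivity
  · have : cubic r (rootTwoBound r) = -(2 * (2 + r) * (1 - r) ^ 2 / 27) := by
      unfold cubic rootTwoBound; ring
    rw [this, neg_nonpos]
    positivity

theorem Qderiv_left_root_nonpos (hr : r ≤ t₁) (h₁ : 1 ≤ t₁) (ht : t₁ ≤ t₂) :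
    Qderiv r t₁ t₂ t₁ ≤ 0 := by
  have : Qderiv r t₁ t₂ t₁ = cubic r t₁ * (t₁ - t₂) := by unfold Qderiv; ring
  rw [this]
  exact mul_nonpos_of_nonneg_of_nonpos
    (mul_nonneg (mul_nonneg (by linarith) (by linarith)) (by linarith)) (by linarith)

theorem Qderiv_pos_of_three_le (hc : 0 ≤ cubic r x) (hx : x < 3)
    (h : 2 * cubic r x < cubicDeriv r x * (3 - x)) (h₁ : 3 ≤ t₁) (h₂ : 3 ≤ t₂) :
    0 < Qderiv r t₁ t₂ x := by
  have hd : 0 ≤ cubicDeriv r x := by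
    by_contra! hd; nlinarith [mul_neg_of_neg_of_pos hd (sub_pos.2 hx)]
  have huv : (3 - x) * ((t₁ - x) + (t₂ - x)) ≤ 2 * ((t₁ - x) * (t₂ - x)) := by
    nlinarith [mul_nonneg (sub_nonneg.2 h₁) (by linarith : 0 ≤ t₂ - x),
      mul_nonneg (sub_nonneg.2 h₂) (by linarith : 0 ≤ t₁ - x)]
  have hsum : 0 < (t₁ - x) + (t₂ - x) := by linarith
  unfold Qderiv
  nlinarith [mul_le_mul_of_nonneg_left huv hd, mul_lt_mul_of_pos_right h hsum]

theorem two_mul_cubic_rootThreeBound_lt (hr0 : 0 ≤ r) (hr1 : r ≤ 1) :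
    2 * cubic r (rootThreeBound r) < cubicDeriv r (rootThreeBound r) * (3 - rootThreeBound r) := by
  unfold cubic cubicDeriv rootThreeBound rootTwoBound
  nlinarith [mul_nonneg hr0 (sub_nonneg.2 hr1), mul_nonneg (mul_nonneg hr0 hr0) (sub_nonneg.2 hr1)]

theorem Qderiv_rootThreeBound_pos (hr0 : 0 ≤ r) (hr1 : r ≤ 1) (h₁ : 3 ≤ t₁) (h₂ : 3 ≤ t₂) :
    0 < Qderiv r t₁ t₂ (rootThreeBound r) := by
  have hB₁ : 1 ≤ rootThreeBound r := by unfold rootThreeBound rootTwoBound; linarith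
  have hB₃ : rootThreeBound r < 3 := by unfold rootThreeBound rootTwoBound; linarith
  have hc : 0 ≤ cubic r (rootThreeBound r) :=
    mul_nonneg (mul_nonneg (by linarith) (by linarith)) (by linarith)
  exact Qderiv_pos_of_three_le hc hB₃ (two_mul_cubic_rootThreeBound_lt hr0 hr1) h₁ h₂

end Signs

section RootBounds

variable {r t₁ t₂ ξ₁ ξ₂ ξ₃ ξ₄ : ℝ}

theorem root₁_nonneg (hQ : ∀ x, Qderiv r t₁ t₂ x = 5 * rootProduct ξ₁ ξ₂ ξ₃ ξ₄ x)
    (hr0 : 0 ≤ r) (h₁ : 0 ≤ t₁) (h₂ : 0 ≤ t₂) : 0 ≤ ξ₁ := by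
  by_contra! h
  have := Qderiv_pos_of_neg hr0 h₁ h₂ h
  simp [hQ, rootProduct] at this

theorem root₁_le_half (hQ : ∀ x, Qderiv r t₁ t₂ x = 5 * rootProduct ξ₁ ξ₂ ξ₃ ξ₄ x)
    (h₁₂ : ξ₁ ≤ ξ₂) (h₂₃ : ξ₂ ≤ ξ₃) (h₃₄ : ξ₃ ≤ ξ₄)
    (hr : r ≤ 2) (h₁ : r / 2 ≤ t₁) (h₂ : r / 2 ≤ t₂) : ξ₁ ≤ r / 2 :=
  root₁_le_of_rootProduct_nonpos h₁₂ h₂₃ h₃₄ <| by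
    linarith [hQ (r / 2), Qderiv_half_nonpos hr h₁ h₂]

theorem root₂_le_rootTwoBound (hQ : ∀ x, Qderiv r t₁ t₂ x = 5 * rootProduct ξ₁ ξ₂ ξ₃ ξ₄ x)
    (h₂₃ : ξ₂ ≤ ξ₃) (h₃₄ : ξ₃ ≤ ξ₄) (hr0 : 0 ≤ r) (hr1 : r ≤ 1) (h₁ : 1 ≤ t₁) (h₂ : 1 ≤ t₂)
    (hξ₁ : ξ₁ ≤ r / 2) : ξ₂ ≤ rootTwoBound r := by
  have hlt : ξ₁ < rootTwoBound r := by unfold rootTwoBound; linarith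
  exact root₂_le_of_rootProduct_nonneg h₂₃ h₃₄ hlt <| by
    linarith [hQ (rootTwoBound r), Qderiv_rootTwoBound_nonneg hr0 hr1 h₁ h₂]

theorem left_root_le_root₄ (hQ : ∀ x, Qderiv r t₁ t₂ x = 5 * rootProduct ξ₁ ξ₂ ξ₃ ξ₄ x)
    (h₁₂ : ξ₁ ≤ ξ₂) (h₂₃ : ξ₂ ≤ ξ₃) (h₃₄ : ξ₃ ≤ ξ₄) (hr : r ≤ t₁) (h₁ : 1 ≤ t₁) (ht : t₁ ≤ t₂) :
    t₁ ≤ ξ₄ :=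
  le_root₄_of_rootProduct_nonpos h₁₂ h₂₃ h₃₄ <| by
    linarith [hQ t₁, Qderiv_left_root_nonpos hr h₁ ht]

theorem rootThreeBound_le_root₃ (hQ : ∀ x, Qderiv r t₁ t₂ x = 5 * rootProduct ξ₁ ξ₂ ξ₃ ξ₄ x)
    (h₁₂ : ξ₁ ≤ ξ₂) (h₂₃ : ξ₂ ≤ ξ₃) (hr0 : 0 ≤ r) (hr1 : r ≤ 1) (h₁ : 3 ≤ t₁) (h₂ : 3 ≤ t₂)
    (hξ₄ : t₁ ≤ ξ₄) : rootThreeBound r ≤ ξ₃ := by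
  have hle : rootThreeBound r ≤ ξ₄ := by unfold rootThreeBound rootTwoBound; linarith
  exact le_root₃_of_rootProduct_pos h₁₂ h₂₃ hle <| by
    linarith [hQ (rootThreeBound r), Qderiv_rootThreeBound_pos hr0 hr1 h₁ h₂]

end RootBounds

/-- For `Q(x) = x(x-r)(x-1)(x-t₁)(x-t₂)` with `0 ≤ r ≤ 1` and `3 ≤ t₁ ≤ t₂`, the roots of `Q'` satisfy `ξ₃ - ξ₂ > ξ₂ - ξ₁`. -/
theorem Q_family_xi3_gt
    (r t₁ t₂ : ℝ) (hr0 : 0 ≤ r) (hr1 : r ≤ 1) (ht₁ : 3 ≤ t₁) (ht : t₁ ≤ t₂)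
    (ξ₁ ξ₂ ξ₃ ξ₄ : ℝ) (hξ12 : ξ₁ ≤ ξ₂) (hξ23 : ξ₂ ≤ ξ₃) (hξ34 : ξ₃ ≤ ξ₄)
    (hder : ∀ x : ℝ,
      deriv (fun t : ℝ => t * (t - r) * (t - 1) * (t - t₁) * (t - t₂)) x
        = 5 * (x - ξ₁) * (x - ξ₂) * (x - ξ₃) * (x - ξ₄)) :
    ξ₃ - ξ₂ > ξ₂ - ξ₁ := by
  have hQ (x : ℝ) : Qderiv r t₁ t₂ x = 5 * rootProduct ξ₁ ξ₂ ξ₃ ξ₄ x := by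
    rw [← (hasDerivAt_Q_s9 r t₁ t₂ x).deriv, hder, rootProduct]
    ring
  have ht₂ : 3 ≤ t₂ := ht₁.trans ht
  have h₁ : 0 ≤ ξ₁ := root₁_nonneg hQ hr0 (by linarith) (by linarith)
  have h₁' : ξ₁ ≤ r / 2 := root₁_le_half hQ hξ12 hξ23 hξ34 (by linarith) (by linarith) (by linarith)
  have h₂ : ξ₂ ≤ rootTwoBound r :=
    root₂_le_rootTwoBound hQ hξ23 hξ34 hr0 hr1 (by linarith) (by linarith) h₁'
  have h₄ : t₁ ≤ ξ₄ := left_root_le_root₄ hQ hξ12 hξ23 hξ34 (by linarith) (by linarith) ht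
  have h₃ : rootThreeBound r ≤ ξ₃ := rootThreeBound_le_root₃ hQ hξ12 hξ23 hr0 hr1 ht₁ ht₂ h₄
  rw [rootThreeBound] at h₃
  linarith
end

section
/- Let Q(x) = x(x−r)(x−1)(x−t₁)(x−t₂) with 0 ≤ r ≤ 1 and 3 ≤ t₁ ≤ t₂, and let ξ₁ ≤ ξ₂ ≤ ξ₃ ≤ ξ₄ be the roots of Q′ counted with multiplicity. Then ξ₄ − ξ₃ > ξ₂ − ξ₁. -/
/-!
Write `σ = 1 + r + t₁ + t₂`. Comparing the coefficients of `x³` in `Q' = 5 ∏ (x - ξᵢ)` gives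
`ξ₁ + ξ₂ + ξ₃ + ξ₄ = 4σ/5`, so the claim is `ξ₂ + ξ₃ < 2σ/5`. A quartic with positive leading
coefficient and roots `ξ₁ ≤ ξ₂ ≤ ξ₃ ≤ ξ₄` is negative exactly on `(ξ₁, ξ₂) ∪ (ξ₃, ξ₄)`. With
`v = (2 + r)/3` and `w = 2σ/5 - v` one has `1/2 < v < w` and the sign pattern
`Q'(1/2) < 0 ≤ Q'(v)`, `Q'(w) < 0` (explicit polynomial inequalities in `r`, `t₁ - 3`, `t₂ - t₁`),
which forces `ξ₂ ≤ v` and `ξ₃ < w`.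
-/

section Quartic

variable {k a b c d x : ℝ}

lemma mem_Ioo_or_mem_Ioo_of_quartic_neg_s10 (hk : 0 ≤ k) (hab : a ≤ b) (hcd : c ≤ d)
    (h : k * (x - a) * (x - b) * (x - c) * (x - d) < 0) :
    x ∈ Set.Ioo a b ∨ x ∈ Set.Ioo c d := by
  have factor_nonneg {p q : ℝ} (hpq : p ≤ q) (hx : x ∉ Set.Ioo p q) : 0 ≤ (x - p) * (x - q) := by
    rcases le_or_gt x p with hxp | hpx
    · exact mul_nonneg_of_nonpos_of_nonpos (by linarith) (by linarith)
    · exact mul_nonneg (by linarith) (by linarith [not_lt.1 fun hxq => hx ⟨hpx, hxq⟩])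
  by_contra! hx
  have := mul_nonneg hk (mul_nonneg (factor_nonneg hab hx.1) (factor_nonneg hcd hx.2))
  linarith

lemma quartic_neg_of_mem_Ioo (hk : 0 < k) (hbc : b ≤ c) (hcd : c ≤ d) (hx : x ∈ Set.Ioo a b) :
    k * (x - a) * (x - b) * (x - c) * (x - d) < 0 := by
  obtain ⟨hax, hxb⟩ := hx
  have : 0 < k * (x - a) * (b - x) * (c - x) * (d - x) :=
    mul_pos (mul_pos (mul_pos (mul_pos hk (by linarith)) (by linarith)) (by linarith))
      (by linarith)
  linarith

lemma le_and_lt_of_quartic_sign_pattern {u v w : ℝ} (hk : 0 < k) (hab : a ≤ b) (hbc : b ≤ c)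
    (hcd : c ≤ d) (huv : u < v) (hvw : v < w)
    (hu : k * (u - a) * (u - b) * (u - c) * (u - d) < 0)
    (hv : 0 ≤ k * (v - a) * (v - b) * (v - c) * (v - d))
    (hw : k * (w - a) * (w - b) * (w - c) * (w - d) < 0) :
    b ≤ v ∧ c < w := by
  rcases mem_Ioo_or_mem_Ioo_of_quartic_neg_s10 hk.le hab hcd hu with ⟨hau, -⟩ | ⟨hcu, -⟩
  · have hbv : b ≤ v := by
      by_contra! hvb
      linarith [quartic_neg_of_mem_Ioo hk hbc hcd ⟨hau.trans huv, hvb⟩]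
    rcases mem_Ioo_or_mem_Ioo_of_quartic_neg_s10 hk.le hab hcd hw with ⟨-, hwb⟩ | ⟨hcw, -⟩
    · linarith
    · exact ⟨hbv, hcw⟩
  · exact ⟨by linarith, by linarith⟩

end Quartic

def derivQ (r t₁ t₂ x : ℝ) : ℝ :=
  (x - r) * (x - 1) * (x - t₁) * (x - t₂) + x * (x - 1) * (x - t₁) * (x - t₂)
    + x * (x - r) * (x - t₁) * (x - t₂) + x * (x - r) * (x - 1) * (x - t₂)
    + x * (x - r) * (x - 1) * (x - t₁)

lemma hasDerivAt_quintic_s10 (r t₁ t₂ x : ℝ) :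
    HasDerivAt (fun t : ℝ => t * (t - r) * (t - 1) * (t - t₁) * (t - t₂)) (derivQ r t₁ t₂ x) x := by
  refine ((((((hasDerivAt_id' x).mul ((hasDerivAt_id' x).sub_const r)).mul
    ((hasDerivAt_id' x).sub_const 1)).mul ((hasDerivAt_id' x).sub_const t₁)).mul
    ((hasDerivAt_id' x).sub_const t₂))).congr_deriv ?_
  simp only [derivQ, Pi.mul_apply]
  ring

lemma sum_eq_of_derivQ_eq {r t₁ t₂ ξ₁ ξ₂ ξ₃ ξ₄ : ℝ}
    (h : ∀ x, derivQ r t₁ t₂ x = 5 * (x - ξ₁) * (x - ξ₂) * (x - ξ₃) * (x - ξ₄)) :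
    ξ₁ + ξ₂ + ξ₃ + ξ₄ = 4 / 5 * (1 + r + t₁ + t₂) := by
  -- `p 2 - p (-2) - 2 p 1 + 2 p (-1)` is `12` times the `x³`-coefficient of a quartic `p`
  simp only [derivQ] at h
  linear_combination (1 / 60 : ℝ) * (h 2 - h (-2) - 2 * h 1 + 2 * h (-1))

section Signs

variable {r a b : ℝ}

lemma derivQ_half_neg (hr : 0 ≤ r) (ha : 0 ≤ a) (hb : 0 ≤ b) :
    derivQ r (3 + a) (3 + a + b) (1 / 2) < 0 := by
  calc derivQ r (3 + a) (3 + a + b) (1 / 2)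
      = -(15 + 20 * r + (8 + 4 * r) * b + (16 + 8 * r) * a + 4 * a * b + 4 * a ^ 2) / 16 := by
        unfold derivQ; ring
    _ < 0 := div_neg_of_neg_of_pos (neg_neg_of_pos (by positivity)) (by norm_num)

lemma derivQ_nonneg (hr0 : 0 ≤ r) (hr1 : r ≤ 1) (ha : 0 ≤ a) (hb : 0 ≤ b) :
    0 ≤ derivQ r (3 + a) (3 + a + b) ((2 + r) / 3) := by
  have hs : 0 ≤ 1 - r := by linarith
  calc (0 : ℝ)
      ≤ (1 - r) * (56 + 52 * r + 52 * r * (1 - r) + 7 * r * (1 - r) ^ 2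
          + (12 + 42 * r + 15 * r * (1 - r)) * b + (24 + 84 * r + 30 * r * (1 - r)) * a
          + 27 * r * a * b + 27 * r * a ^ 2) / 81 := by positivity
    _ = derivQ r (3 + a) (3 + a + b) ((2 + r) / 3) := by unfold derivQ; ring

lemma derivQ_neg (hr0 : 0 ≤ r) (hr1 : r ≤ 1) (ha : 0 ≤ a) (hb : 0 ≤ b) :
    derivQ r (3 + a) (3 + a + b) (2 / 5 * (1 + r + (3 + a) + (3 + a + b)) - (2 + r) / 3) < 0 := by
  have hs : 0 ≤ 1 - r := by linarith
  have hs' : 0 ≤ 2 - r := by linarith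
  -- expanded in `s = 1 - r`; the negative `s²` and `s³` terms are absorbed via
  -- `s - s² = s r` and `s - s³ = s r (2 - r)`
  calc derivQ r (3 + a) (3 + a + b) (2 / 5 * (1 + r + (3 + a) + (3 + a + b)) - (2 + r) / 3)
      = -(324 * (24 + 47 * b + 76 * b ^ 2 + 33 * b ^ 3 + 4 * b ^ 4 + 94 * a + 94 * a * b
            + 83 * a * b ^ 2 + 17 * a * b ^ 3 + 94 * a ^ 2 + 51 * a ^ 2 * b + 21 * a ^ 2 * b ^ 2
            + 34 * a ^ 3 + 8 * a ^ 3 * b + 4 * a ^ 4)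
          + (1 - r) * (11349 + 11784 * b + 9720 * b ^ 2 + 1836 * b ^ 3 + 23568 * a
            + 11880 * a * b + 4536 * a * b ^ 2 + 11880 * a ^ 2 + 2592 * a ^ 2 * b + 1728 * a ^ 3)
          + 81 * (1 - r) * r * (36 + 9 * b + 4 * b ^ 2 + 18 * a + a * b + a ^ 2)
          + 69 * (1 - r) * r * (2 - r) * (3 + b + 2 * a) + 11 * (1 - r) ^ 4) / 10125 := by
        unfold derivQ; ring
    _ < 0 := div_neg_of_neg_of_pos (neg_neg_of_pos (by positivity)) (by norm_num)

end Signs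

/-- For `Q(x) = x(x-r)(x-1)(x-t₁)(x-t₂)` with `0 ≤ r ≤ 1` and `3 ≤ t₁ ≤ t₂`, the roots of `Q'` satisfy `ξ₄ - ξ₃ > ξ₂ - ξ₁`. -/
theorem Q_family_xi4_gt
    (r t₁ t₂ : ℝ) (hr0 : 0 ≤ r) (hr1 : r ≤ 1) (ht₁ : 3 ≤ t₁) (ht : t₁ ≤ t₂)
    (ξ₁ ξ₂ ξ₃ ξ₄ : ℝ) (hξ12 : ξ₁ ≤ ξ₂) (hξ23 : ξ₂ ≤ ξ₃) (hξ34 : ξ₃ ≤ ξ₄)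
    (hder : ∀ x : ℝ,
      deriv (fun t : ℝ => t * (t - r) * (t - 1) * (t - t₁) * (t - t₂)) x
        = 5 * (x - ξ₁) * (x - ξ₂) * (x - ξ₃) * (x - ξ₄)) :
    ξ₄ - ξ₃ > ξ₂ - ξ₁ := by
  have hQ' (x : ℝ) : derivQ r t₁ t₂ x = 5 * (x - ξ₁) * (x - ξ₂) * (x - ξ₃) * (x - ξ₄) :=
    (hasDerivAt_quintic_s10 r t₁ t₂ x).deriv.symm.trans (hder x)
  have hsum := sum_eq_of_derivQ_eq hQ'
  obtain ⟨a, ha, rfl⟩ : ∃ a, 0 ≤ a ∧ t₁ = 3 + a := ⟨t₁ - 3, by linarith, by ring⟩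
  obtain ⟨b, hb, rfl⟩ : ∃ b, 0 ≤ b ∧ t₂ = 3 + a + b := ⟨t₂ - (3 + a), by linarith, by ring⟩
  obtain ⟨hξ₂, hξ₃⟩ := le_and_lt_of_quartic_sign_pattern (by norm_num : (0 : ℝ) < 5)
    hξ12 hξ23 hξ34 (by linarith : 1 / 2 < (2 + r) / 3) (by linarith)
    (hQ' _ ▸ derivQ_half_neg hr0 ha hb) (hQ' _ ▸ derivQ_nonneg hr0 hr1 ha hb)
    (hQ' _ ▸ derivQ_neg hr0 hr1 ha hb)
  linarith
end

section
/- Under the hypotheses of the F-family: (1) if c ≤ 0.6, then ξ₄ − z₄ ≥ κ₀, where κ₀ = (3.2 + √1.24)/5 − 0.8 = 0.0627105746… > 0.05; (2) if c ≤ 0.5, then ξ₄ − z₄ ≥ κ₁, where κ₁ = (3 + √1.5)/5 − 0.75 = 0.0949489742…. Here z₄ = (c+1)/2 and ξ₄ is the largest root of F′. -/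
/-!
Write `F(x) = (x - a)(x - b) · x(x - c)(x - 1)`. By the product rule `F'(s)` is bilinear in
`(a, b)`, so on the square `[0, c]²` it is bounded above by its largest value at a corner; these
values are the derivatives of `x³(x - c)(x - 1)`, `x²(x - c)²(x - 1)` and `x(x - c)³(x - 1)`.
For `c ≤ s ≤ 1` all three are controlled by `p_c(s) = 5s² - 4(1 + c)s + 3c`, the cofactor of `s²`
in the first one. Since `F' > 0` to the right of `ξ₄`, every `s ∈ [c, 1]` with `p_c(s) ≤ 0` lies
below `ξ₄`. Finally `c ↦ p_c(z₄ + κ)` is increasing, so the shift `κ` that places `z₄ + κ` at the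
largest root of `p_{c₀}` works for every `c ≤ c₀`; the constants `κ₀, κ₁` are this shift for
`c₀ = 0.6, 0.5`.
-/

theorem affine_nonpos_of_endpoints {p q t₀ t₁ t : ℝ} (h₀ : t₀ ≤ t) (h₁ : t ≤ t₁)
    (hp₀ : p + q * t₀ ≤ 0) (hp₁ : p + q * t₁ ≤ 0) : p + q * t ≤ 0 := by
  rcases le_total 0 q with hq | hq
  · linarith [mul_le_mul_of_nonneg_left h₁ hq]
  · linarith [mul_le_mul_of_nonpos_left h₀ hq]

theorem bilinear_nonpos_of_corners {α β γ δ x₀ x₁ y₀ y₁ x y : ℝ}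
    (hx₀ : x₀ ≤ x) (hx₁ : x ≤ x₁) (hy₀ : y₀ ≤ y) (hy₁ : y ≤ y₁)
    (h₀₀ : α + β * x₀ + γ * y₀ + δ * x₀ * y₀ ≤ 0) (h₁₀ : α + β * x₁ + γ * y₀ + δ * x₁ * y₀ ≤ 0)
    (h₀₁ : α + β * x₀ + γ * y₁ + δ * x₀ * y₁ ≤ 0) (h₁₁ : α + β * x₁ + γ * y₁ + δ * x₁ * y₁ ≤ 0) :
    α + β * x + γ * y + δ * x * y ≤ 0 := by
  have edge (y' : ℝ) (h₀ : α + β * x₀ + γ * y' + δ * x₀ * y' ≤ 0)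
      (h₁ : α + β * x₁ + γ * y' + δ * x₁ * y' ≤ 0) : α + β * x + γ * y' + δ * x * y' ≤ 0 := by
    have := affine_nonpos_of_endpoints (p := α + γ * y') (q := β + δ * y') hx₀ hx₁
      (by linarith) (by linarith)
    linarith
  have := affine_nonpos_of_endpoints (p := α + β * x) (q := γ + δ * x) hy₀ hy₁
    (by linarith [edge y₀ h₀₀ h₁₀]) (by linarith [edge y₁ h₀₁ h₁₁])
  linarith

theorem prod_sub_pos_of_lt {ξ₁ ξ₂ ξ₃ ξ₄ s : ℝ} (h₁₂ : ξ₁ ≤ ξ₂) (h₂₃ : ξ₂ ≤ ξ₃) (h₃₄ : ξ₃ ≤ ξ₄)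
    (hs : ξ₄ < s) : 0 < (s - ξ₁) * (s - ξ₂) * (s - ξ₃) * (s - ξ₄) := by
  have h₃ : 0 < s - ξ₃ := by linarith
  have h₂ : 0 < s - ξ₂ := by linarith
  have h₁ : 0 < s - ξ₁ := by linarith
  have h₄ : 0 < s - ξ₄ := by linarith
  positivity

theorem hasDerivAt_F_family (a b c x : ℝ) :
    HasDerivAt (fun t : ℝ => t * (t - a) * (t - b) * (t - c) * (t - 1))
      ((3 * x ^ 2 - 2 * (1 + c) * x + c) * (x - a) * (x - b)
        + x * (x - c) * (x - 1) * (2 * x - a - b)) x := by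
  have h := ((((hasDerivAt_id x).mul ((hasDerivAt_id x).sub_const a)).mul
    ((hasDerivAt_id x).sub_const b)).mul ((hasDerivAt_id x).sub_const c)).mul
    ((hasDerivAt_id x).sub_const 1)
  refine h.congr_deriv ?_
  simp only [Pi.mul_apply, id_eq]
  ring

theorem F_family_deriv_nonpos {a b c s : ℝ} (ha : 0 ≤ a) (hac : a ≤ c) (hb : 0 ≤ b) (hbc : b ≤ c)
    (hcs : c ≤ s) (hs : s ≤ 1) (hp : 5 * s ^ 2 - 4 * (1 + c) * s + 3 * c ≤ 0) :
    (3 * s ^ 2 - 2 * (1 + c) * s + c) * (s - a) * (s - b)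
      + s * (s - c) * (s - 1) * (2 * s - a - b) ≤ 0 := by
  have hc : 0 ≤ c := ha.trans hac
  set Q := 3 * s ^ 2 - 2 * (1 + c) * s + c
  set R := s * (s - c) * (s - 1)
  set p := 5 * s ^ 2 - 4 * (1 + c) * s + 3 * c
  have hp₁ : p + c * (s - 1) ≤ 0 := by nlinarith
  have hp₂ : p + 2 * c * (s - 1) ≤ 0 := by nlinarith
  have hmixed : s * (s - c) * (p + c * (s - 1)) ≤ 0 :=
    mul_nonpos_of_nonneg_of_nonpos (mul_nonneg (by linarith) (by linarith)) hp₁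
  have h₀₀ : s ^ 2 * p ≤ 0 := mul_nonpos_of_nonneg_of_nonpos (sq_nonneg s) hp
  have h₁₁ : (s - c) ^ 2 * (p + 2 * c * (s - 1)) ≤ 0 :=
    mul_nonpos_of_nonneg_of_nonpos (sq_nonneg _) hp₂
  have hbilin : Q * (s - a) * (s - b) + R * (2 * s - a - b)
      = (Q * s ^ 2 + 2 * R * s) + -(Q * s + R) * a + -(Q * s + R) * b + Q * a * b := by ring
  rw [hbilin]
  apply bilinear_nonpos_of_corners ha hac hb hbc
  · convert h₀₀ using 1; ring
  · convert hmixed using 1; ring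
  · convert hmixed using 1; ring
  · convert h₁₁ using 1; ring

theorem F_family_xi4_sub_z4_ge_of_root {a b c ξ₁ ξ₂ ξ₃ ξ₄ c₀ κ : ℝ}
    (ha : 0 ≤ a) (hab : a ≤ b) (hbc : b ≤ c)
    (h₁₂ : ξ₁ ≤ ξ₂) (h₂₃ : ξ₂ ≤ ξ₃) (h₃₄ : ξ₃ ≤ ξ₄)
    (hder : ∀ x : ℝ, deriv (fun t : ℝ => t * (t - a) * (t - b) * (t - c) * (t - 1)) x
      = 5 * (x - ξ₁) * (x - ξ₂) * (x - ξ₃) * (x - ξ₄))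
    (hc : c ≤ c₀) (hκ : 0 ≤ κ) (hs₀ : (c₀ + 1) / 2 + κ ≤ 1)
    (hroot : 5 * ((c₀ + 1) / 2 + κ) ^ 2 - 4 * (1 + c₀) * ((c₀ + 1) / 2 + κ) + 3 * c₀ ≤ 0) :
    κ ≤ ξ₄ - (c + 1) / 2 := by
  set s := (c + 1) / 2 + κ with hs_def
  have hp : 5 * s ^ 2 - 4 * (1 + c) * s + 3 * c ≤ 0 := by
    rw [hs_def]
    -- `p_{c₀}(s₀) - p_c(s) = (c₀ - c) (3 (2 - c₀ - c) + 4κ) / 4`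
    nlinarith [mul_nonneg (sub_nonneg.2 hc) (by linarith : 0 ≤ 3 * (2 - c₀ - c) + 4 * κ)]
  have hderiv_nonpos := F_family_deriv_nonpos ha (hab.trans hbc) (ha.trans hab) hbc
    (by linarith) (by linarith) hp
  have hs : s ≤ ξ₄ := by
    by_contra! hlt
    have hpos := prod_sub_pos_of_lt h₁₂ h₂₃ h₃₄ hlt
    have hderiv_eq := hder s
    rw [(hasDerivAt_F_family a b c s).deriv] at hderiv_eq
    linarith
  linarith

theorem F_family_xi4_sub_z4_ge {a b c ξ₁ ξ₂ ξ₃ ξ₄ c₀ : ℝ}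
    (ha : 0 ≤ a) (hab : a ≤ b) (hbc : b ≤ c)
    (h₁₂ : ξ₁ ≤ ξ₂) (h₂₃ : ξ₂ ≤ ξ₃) (h₃₄ : ξ₃ ≤ ξ₄)
    (hder : ∀ x : ℝ, deriv (fun t : ℝ => t * (t - a) * (t - b) * (t - c) * (t - 1)) x
      = 5 * (x - ξ₁) * (x - ξ₂) * (x - ξ₃) * (x - ξ₄))
    (hc : c ≤ c₀) (hc₀ : c₀ ≤ 1) :
    (2 * (1 + c₀) + √(4 * (1 + c₀) ^ 2 - 15 * c₀)) / 5 - (1 + c₀) / 2 ≤ ξ₄ - (c + 1) / 2 := by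
  have hD : 0 ≤ 4 * (1 + c₀) ^ 2 - 15 * c₀ := by nlinarith
  have hsq := Real.sq_sqrt hD
  apply F_family_xi4_sub_z4_ge_of_root ha hab hbc h₁₂ h₂₃ h₃₄ hder hc
  · nlinarith [Real.sqrt_nonneg (4 * (1 + c₀) ^ 2 - 15 * c₀)]
  · nlinarith [Real.sqrt_nonneg (4 * (1 + c₀) ^ 2 - 15 * c₀)]
  · nlinarith

theorem F_family_xi4_sub_z4_lower_bounds_general
    (a b c : ℝ) (ha : 0 ≤ a) (hab : a ≤ b) (hbc : b ≤ c)
    (ξ₁ ξ₂ ξ₃ ξ₄ : ℝ) (hξ12 : ξ₁ ≤ ξ₂) (hξ23 : ξ₂ ≤ ξ₃) (hξ34 : ξ₃ ≤ ξ₄)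
    (hder : ∀ x : ℝ,
      deriv (fun t : ℝ => t * (t - a) * (t - b) * (t - c) * (t - 1)) x
        = 5 * (x - ξ₁) * (x - ξ₂) * (x - ξ₃) * (x - ξ₄))
    (z₄ : ℝ)
    (hz₄ : z₄ = (c + 1) / 2) :
    (c ≤ 0.6 → ξ₄ - z₄ ≥ (3.2 + Real.sqrt 1.24) / 5 - 0.8) ∧
      (c ≤ 0.5 → ξ₄ - z₄ ≥ (3 + Real.sqrt 1.5) / 5 - 0.75) := by
  subst hz₄
  refine ⟨fun hc => ?_, fun hc => ?_⟩ <;>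
  · have := F_family_xi4_sub_z4_ge ha hab hbc hξ12 hξ23 hξ34 hder hc (by norm_num)
    norm_num at this ⊢
    linarith

/-- For `F(x) = x(x-a)(x-b)(x-c)(x-1)` with `0 ≤ a ≤ b ≤ c ≤ 1`:
(1) if `c ≤ 0.6` then `ξ₄ - z₄ ≥ κ₀ = (3.2 + √1.24)/5 - 0.8 > 0.05`;
(2) if `c ≤ 0.5` then `ξ₄ - z₄ ≥ κ₁ = (3 + √1.5)/5 - 0.75`. -/
theorem F_family_xi4_sub_z4_lower_bounds
    (a b c : ℝ) (ha : 0 ≤ a) (hab : a ≤ b) (hbc : b ≤ c) (hc1 : c ≤ 1)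
    (ξ₁ ξ₂ ξ₃ ξ₄ : ℝ) (hξ12 : ξ₁ ≤ ξ₂) (hξ23 : ξ₂ ≤ ξ₃) (hξ34 : ξ₃ ≤ ξ₄)
    (hder : ∀ x : ℝ,
      deriv (fun t : ℝ => t * (t - a) * (t - b) * (t - c) * (t - 1)) x
        = 5 * (x - ξ₁) * (x - ξ₂) * (x - ξ₃) * (x - ξ₄))
    (z₁ z₂ z₃ z₄ : ℝ)
    (hz₁ : z₁ = a / 2) (hz₂ : z₂ = (a + b) / 2)
    (hz₃ : z₃ = (b + c) / 2) (hz₄ : z₄ = (c + 1) / 2) :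
    (c ≤ 0.6 → ξ₄ - z₄ ≥ (3.2 + Real.sqrt 1.24) / 5 - 0.8) ∧
      (c ≤ 0.5 → ξ₄ - z₄ ≥ (3 + Real.sqrt 1.5) / 5 - 0.75) :=
  F_family_xi4_sub_z4_lower_bounds_general a b c ha hab hbc ξ₁ ξ₂ ξ₃ ξ₄ hξ12 hξ23 hξ34 hder z₄ hz₄
end

section
/- Under the hypotheses of the F-family: (1) if c ≤ 0.6 and c − b ≤ 0.25, then ξ₄ − ξ₃ > z₄ − z₃; (2) if c ≤ 0.5 and c − b ≤ 0.379, then likewise ξ₄ − ξ₃ > z₄ − z₃. -/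
/-!
The derivative `F'` has one root in each of the gaps `[0,a], [a,b], [b,c], [c,1]`; in particular
`ξ₂ ≤ b`. Since `F' = 5 ∏ (x - ξᵢ)`, a point `u ≥ ξ₂` where `F' < 0` lies in `(ξ₃, ξ₄)`, so two
points `u` and `u + (1 - b)/2` where `F' < 0` force `ξ₄ - ξ₃ > (1 - b)/2 = z₄ - z₃`. Suitable
points `u`, linear in `b` and `c`, are found numerically; since `F'(x)` is affine in `a`, the sign
only has to be certified at `a = 0` and `a = b`, where it follows from pairwise products of the
linear constraints on `(b, c)`.
-/

namespace FFamily

def F (a b c x : ℝ) : ℝ := x * (x - a) * (x - b) * (x - c) * (x - 1)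

def dF (a b c x : ℝ) : ℝ :=
  5 * x ^ 4 - 4 * (1 + a + b + c) * x ^ 3 + 3 * (a + b + c + a * b + a * c + b * c) * x ^ 2
    - 2 * (a * b + a * c + b * c + a * b * c) * x + a * b * c

theorem hasDerivAt_F (a b c x : ℝ) : HasDerivAt (F a b c) (dF a b c x) x := by
  have h := ((((hasDerivAt_id x).mul ((hasDerivAt_id x).sub_const a)).mul
    ((hasDerivAt_id x).sub_const b)).mul ((hasDerivAt_id x).sub_const c)).mul
    ((hasDerivAt_id x).sub_const 1)
  exact h.congr_deriv (by simp only [Pi.mul_apply, id, dF]; ring)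

theorem dF_at_b_nonneg {a b c : ℝ} (ha : 0 ≤ a) (hab : a ≤ b) (hbc : b ≤ c) (hc1 : c ≤ 1) :
    0 ≤ dF a b c b := by
  have h : dF a b c b = (b * (b - a)) * ((c - b) * (1 - b)) := by unfold dF; ring
  rw [h]
  exact mul_nonneg (mul_nonneg (ha.trans hab) (sub_nonneg.2 hab))
    (mul_nonneg (sub_nonneg.2 hbc) (by linarith))

theorem mul_dF_eq_sub_mul_add_mul (a b c x : ℝ) :
    b * dF a b c x = (b - a) * dF 0 b c x + a * dF b b c x := by
  unfold dF; ring

theorem dF_neg_of_endpoints {a b c x : ℝ} (ha : 0 ≤ a) (hab : a ≤ b)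
    (h₀ : dF 0 b c x < 0) (h₁ : dF b b c x < 0) : dF a b c x < 0 := by
  rcases ha.eq_or_lt with rfl | ha
  · exact h₀
  · have h : b * dF a b c x < 0 := by
      rw [mul_dF_eq_sub_mul_add_mul]
      nlinarith [mul_nonneg (sub_nonneg.2 hab) (neg_nonneg.2 h₀.le), mul_pos ha (neg_pos.2 h₁)]
    exact neg_of_mul_neg_right h (ha.le.trans hab)

theorem dF_neg_of_le_three_fifths {a b c : ℝ} (ha : 0 ≤ a) (hab : a ≤ b) (hbc : b ≤ c)
    (hc : c ≤ 3 / 5) (hgap : c - b ≤ 1 / 4) :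
    dF a b c (11 / 20 * b + 3 / 20 * c + 13 / 50) < 0 ∧
      dF a b c (11 / 20 * b + 3 / 20 * c + 13 / 50 + (1 - b) / 2) < 0 := by
  have g₀ := ha.trans hab
  have g₁ := sub_nonneg.2 hbc
  have g₂ := sub_nonneg.2 hc
  have g₃ := sub_nonneg.2 hgap
  constructor <;> apply dF_neg_of_endpoints ha hab <;> unfold dF <;>
    nlinarith [mul_nonneg g₀ g₀, mul_nonneg g₀ g₁, mul_nonneg g₀ g₂, mul_nonneg g₀ g₃,
      mul_nonneg g₁ g₁, mul_nonneg g₁ g₂, mul_nonneg g₁ g₃, mul_nonneg g₂ g₂, mul_nonneg g₂ g₃,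
      mul_nonneg g₃ g₃]

theorem dF_neg_of_le_half {a b c : ℝ} (ha : 0 ≤ a) (hab : a ≤ b) (hbc : b ≤ c)
    (hc : c ≤ 1 / 2) (hgap : c - b ≤ 379 / 1000) :
    dF a b c (1 / 2 * b + 1 / 4 * c + 11 / 50) < 0 ∧
      dF a b c (1 / 2 * b + 1 / 4 * c + 11 / 50 + (1 - b) / 2) < 0 := by
  have g₀ := ha.trans hab
  have g₁ := sub_nonneg.2 hbc
  have g₂ := sub_nonneg.2 hc
  have g₃ := sub_nonneg.2 hgap
  constructor <;> apply dF_neg_of_endpoints ha hab <;> unfold dF <;>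
    nlinarith [mul_nonneg g₀ g₀, mul_nonneg g₀ g₁, mul_nonneg g₀ g₂, mul_nonneg g₀ g₃,
      mul_nonneg g₁ g₁, mul_nonneg g₁ g₂, mul_nonneg g₁ g₃, mul_nonneg g₂ g₂, mul_nonneg g₂ g₃,
      mul_nonneg g₃ g₃]

theorem sub_lt_of_prod_neg {ξ₁ ξ₂ ξ₃ ξ₄ u v : ℝ} (h12 : ξ₁ ≤ ξ₂) (h23 : ξ₂ ≤ ξ₃) (h34 : ξ₃ ≤ ξ₄)
    (hu2 : ξ₂ ≤ u) (hu : (u - ξ₁) * (u - ξ₂) * (u - ξ₃) * (u - ξ₄) < 0)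
    (hv : (v - ξ₁) * (v - ξ₂) * (v - ξ₃) * (v - ξ₄) < 0) : v - u < ξ₄ - ξ₃ := by
  have hu3 : ξ₃ < u := by
    by_contra! h
    have := mul_nonneg (mul_nonneg (sub_nonneg.2 (h12.trans hu2)) (sub_nonneg.2 hu2))
      (mul_nonneg (sub_nonneg.2 h) (sub_nonneg.2 (h.trans h34)))
    nlinarith
  have hv4 : v < ξ₄ := by
    by_contra! h
    have h3 := h34.trans h
    have := mul_nonneg (mul_nonneg (sub_nonneg.2 ((h12.trans h23).trans h3))
      (sub_nonneg.2 (h23.trans h3))) (mul_nonneg (sub_nonneg.2 h3) (sub_nonneg.2 h))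
    nlinarith
  linarith

section Roots

variable {a b c ξ₁ ξ₂ ξ₃ ξ₄ : ℝ}
  (hq : ∀ x, dF a b c x = 5 * (x - ξ₁) * (x - ξ₂) * (x - ξ₃) * (x - ξ₄))
include hq

theorem vieta_dF :
    2 * (a * b + a * c + b * c + a * b * c) =
      5 * (ξ₁ * ξ₂ * ξ₃ + ξ₁ * ξ₂ * ξ₄ + ξ₁ * ξ₃ * ξ₄ + ξ₂ * ξ₃ * ξ₄) := by
  have h₁ := hq 1
  have h₂ := hq (-1)
  have h₃ := hq 2
  have h₄ := hq (-2)
  unfold dF at h₁ h₂ h₃ h₄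
  linear_combination (-2/3) * h₁ + (2/3) * h₂ + (1/12) * h₃ - (1/12) * h₄

theorem xi₂_le_b (ha : 0 ≤ a) (hab : a ≤ b) (hbc : b ≤ c) (hc1 : c ≤ 1)
    (h23 : ξ₂ ≤ ξ₃) (h34 : ξ₃ ≤ ξ₄) : ξ₂ ≤ b := by
  by_contra! h
  have h3 := h.trans_le h23
  have h4 := h3.trans_le h34
  rcases lt_or_ge ξ₁ b with h1 | h1
  · -- `F'(b) = b (b - a) (b - c) (b - 1) ≥ 0`, but exactly one root lies below `b`
    have := mul_pos (mul_pos (sub_pos.2 h1) (sub_pos.2 h)) (mul_pos (sub_pos.2 h3) (sub_pos.2 h4))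
    nlinarith [hq b, dF_at_b_nonneg ha hab hbc hc1]
  rcases (ha.trans hab).eq_or_lt with hb | hb
  · -- `a = b = 0`: then `0` is a double root of `F'`
    obtain rfl : b = 0 := hb.symm
    obtain rfl : a = 0 := le_antisymm hab ha
    nlinarith [vieta_dF hq, mul_pos (mul_pos h h3) h4, mul_nonneg h1 (mul_pos h3 h4).le,
      mul_nonneg h1 (mul_pos h h3).le, mul_nonneg h1 (mul_pos h h4).le]
  · -- Rolle on `[0, b]` gives a root of `F'` below `ξ₁`
    obtain ⟨η, hη, hη0⟩ := exists_hasDerivAt_eq_zero hb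
      (fun x _ => (hasDerivAt_F a b c x).continuousAt.continuousWithinAt) (by simp [F])
      (fun x _ => hasDerivAt_F a b c x)
    rw [hq] at hη0
    simp only [mul_eq_zero, sub_eq_zero] at hη0
    rcases hη0 with (((h0 | h0) | h0) | h0) | h0 <;> linarith [hη.2]

theorem sub_lt_of_dF_neg (ha : 0 ≤ a) (hab : a ≤ b) (hbc : b ≤ c) (hc1 : c ≤ 1)
    (h12 : ξ₁ ≤ ξ₂) (h23 : ξ₂ ≤ ξ₃) (h34 : ξ₃ ≤ ξ₄) {u d : ℝ} (hbu : b ≤ u)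
    (hu : dF a b c u < 0) (hv : dF a b c (u + d) < 0) : d < ξ₄ - ξ₃ := by
  have h := sub_lt_of_prod_neg (u := u) (v := u + d) h12 h23 h34
    ((xi₂_le_b hq ha hab hbc hc1 h23 h34).trans hbu)
    (by linarith [hq u]) (by linarith [hq (u + d)])
  simpa using h

end Roots

end FFamily

open FFamily

theorem F_family_xi4_sub_xi3_gt_general
    (a b c : ℝ) (ha : 0 ≤ a) (hab : a ≤ b) (hbc : b ≤ c) (hc1 : c ≤ 1)
    (ξ₁ ξ₂ ξ₃ ξ₄ : ℝ) (hξ12 : ξ₁ ≤ ξ₂) (hξ23 : ξ₂ ≤ ξ₃) (hξ34 : ξ₃ ≤ ξ₄)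
    (hder : ∀ x : ℝ,
      deriv (fun t : ℝ => t * (t - a) * (t - b) * (t - c) * (t - 1)) x
        = 5 * (x - ξ₁) * (x - ξ₂) * (x - ξ₃) * (x - ξ₄))
    (z₃ z₄ : ℝ)
    (hz₃ : z₃ = (b + c) / 2) (hz₄ : z₄ = (c + 1) / 2) :
    (c ≤ 0.6 ∧ c - b ≤ 0.25 → ξ₄ - ξ₃ > z₄ - z₃) ∧
      (c ≤ 0.5 ∧ c - b ≤ 0.379 → ξ₄ - ξ₃ > z₄ - z₃) := by
  have hq : ∀ x, dF a b c x = 5 * (x - ξ₁) * (x - ξ₂) * (x - ξ₃) * (x - ξ₄) :=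
    fun x => (hasDerivAt_F a b c x).deriv.symm.trans (hder x)
  have hgap := fun u =>
    sub_lt_of_dF_neg hq ha hab hbc hc1 hξ12 hξ23 hξ34 (u := u) (d := (1 - b) / 2)
  have hz : z₄ - z₃ = (1 - b) / 2 := by rw [hz₃, hz₄]; ring
  rw [hz]
  refine ⟨fun ⟨hc, hcb⟩ => ?_, fun ⟨hc, hcb⟩ => ?_⟩
  · norm_num at hc hcb
    obtain ⟨hu, hv⟩ := dF_neg_of_le_three_fifths ha hab hbc hc (by linarith)
    exact hgap _ (by linarith) hu hv
  · norm_num at hc hcb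
    obtain ⟨hu, hv⟩ := dF_neg_of_le_half ha hab hbc hc (by linarith)
    exact hgap _ (by linarith) hu hv

/-- For `F(x) = x(x-a)(x-b)(x-c)(x-1)` with `0 ≤ a ≤ b ≤ c ≤ 1`:
(1) if `c ≤ 0.6` and `c - b ≤ 0.25`, then `ξ₄ - ξ₃ > z₄ - z₃`;
(2) if `c ≤ 0.5` and `c - b ≤ 0.379`, then likewise `ξ₄ - ξ₃ > z₄ - z₃`. -/
theorem F_family_xi4_sub_xi3_gt
    (a b c : ℝ) (ha : 0 ≤ a) (hab : a ≤ b) (hbc : b ≤ c) (hc1 : c ≤ 1)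
    (ξ₁ ξ₂ ξ₃ ξ₄ : ℝ) (hξ12 : ξ₁ ≤ ξ₂) (hξ23 : ξ₂ ≤ ξ₃) (hξ34 : ξ₃ ≤ ξ₄)
    (hder : ∀ x : ℝ,
      deriv (fun t : ℝ => t * (t - a) * (t - b) * (t - c) * (t - 1)) x
        = 5 * (x - ξ₁) * (x - ξ₂) * (x - ξ₃) * (x - ξ₄))
    (z₁ z₂ z₃ z₄ : ℝ)
    (hz₁ : z₁ = a / 2) (hz₂ : z₂ = (a + b) / 2)
    (hz₃ : z₃ = (b + c) / 2) (hz₄ : z₄ = (c + 1) / 2) :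
    (c ≤ 0.6 ∧ c - b ≤ 0.25 → ξ₄ - ξ₃ > z₄ - z₃) ∧
      (c ≤ 0.5 ∧ c - b ≤ 0.379 → ξ₄ - ξ₃ > z₄ - z₃) :=
  F_family_xi4_sub_xi3_gt_general a b c ha hab hbc hc1 ξ₁ ξ₂ ξ₃ ξ₄ hξ12 hξ23 hξ34 hder z₃ z₄ hz₃ hz₄
end

section
/- Under the hypotheses of the F-family, if in addition 1/6 ≤ b ≤ 1/4 and c ≥ 1/2, then the case L+ holds, i.e. m ≤ m̃. -/
/-!
Since `z₂ - z₁ = b / 2`, it suffices to show that consecutive critical points of `F` are at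
least `b / 2` apart. The quartic `F'` has positive leading coefficient, so its sign at a point
tells on which side of each `ξᵢ` that point lies. Evaluating `F'` at six probes gives
`ξ₁ ≤ a/2 - a²/4`, `(a+b)/2 - a²/4 ≤ ξ₂ < 11b/10`, `8b/5 ≤ ξ₃ ≤ (c+1-b)/2` and `(c+1)/2 ≤ ξ₄`,
and each gap is at least `b / 2`.
-/

section QuarticSign

variable {k ξ₁ ξ₂ ξ₃ ξ₄ t : ℝ}

theorem quartic_nonpos_iff (hk : 0 < k) (h₁₂ : ξ₁ ≤ ξ₂) (h₂₃ : ξ₂ ≤ ξ₃) (h₃₄ : ξ₃ ≤ ξ₄) :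
    k * (t - ξ₁) * (t - ξ₂) * (t - ξ₃) * (t - ξ₄) ≤ 0 ↔
      (ξ₁ ≤ t ∧ t ≤ ξ₂) ∨ (ξ₃ ≤ t ∧ t ≤ ξ₄) := by
  have hQ : k * (t - ξ₁) * (t - ξ₂) * (t - ξ₃) * (t - ξ₄)
      = k * ((t - ξ₁) * (t - ξ₂) * ((t - ξ₃) * (t - ξ₄))) := by ring
  rw [hQ, mul_nonpos_iff, mul_nonpos_iff, sub_mul_sub_nonneg_iff t h₁₂,
    sub_mul_sub_nonpos_iff t h₁₂, sub_mul_sub_nonneg_iff t h₃₄, sub_mul_sub_nonpos_iff t h₃₄]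
  grind

theorem between_middle_roots_of_quartic_pos (hk : 0 < k) (h₁₂ : ξ₁ ≤ ξ₂) (h₂₃ : ξ₂ ≤ ξ₃)
    (h₃₄ : ξ₃ ≤ ξ₄) (h₁ : ξ₁ ≤ t) (h₄ : t ≤ ξ₄)
    (hQ : 0 < k * (t - ξ₁) * (t - ξ₂) * (t - ξ₃) * (t - ξ₄)) : ξ₂ < t ∧ t < ξ₃ :=
  ⟨lt_of_not_ge fun h ↦ hQ.not_ge ((quartic_nonpos_iff hk h₁₂ h₂₃ h₃₄).2 (.inl ⟨h₁, h⟩)),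
    lt_of_not_ge fun h ↦ hQ.not_ge ((quartic_nonpos_iff hk h₁₂ h₂₃ h₃₄).2 (.inr ⟨h, h₄⟩))⟩

theorem le_third_root_of_quartic_nonneg (hk : 0 < k) (h₁₂ : ξ₁ ≤ ξ₂) (h₂₃ : ξ₂ ≤ ξ₃)
    (h₄ : t < ξ₄) (hQ : 0 ≤ k * (t - ξ₁) * (t - ξ₂) * (t - ξ₃) * (t - ξ₄)) : t ≤ ξ₃ :=
  le_of_not_gt fun h₃ ↦ hQ.not_gt <| mul_neg_of_pos_of_neg
    (mul_pos (mul_pos (mul_pos hk (by linarith)) (by linarith)) (by linarith)) (by linarith)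

end QuarticSign

def fFamilyDeriv (a b c x : ℝ) : ℝ :=
  5 * x ^ 4 - 4 * (a + b + c + 1) * x ^ 3 + 3 * (a * b + a * c + b * c + a + b + c) * x ^ 2
    - 2 * (a * b * c + a * b + a * c + b * c) * x + a * b * c

theorem hasDerivAt_fFamily (a b c x : ℝ) :
    HasDerivAt (fun t : ℝ => t * (t - a) * (t - b) * (t - c) * (t - 1))
      (fFamilyDeriv a b c x) x := by
  have hid := hasDerivAt_id' x
  refine ((((hid.mul (hid.sub_const a)).mul (hid.sub_const b)).mul (hid.sub_const c)).mul
    (hid.sub_const 1)).congr_deriv ?_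
  simp only [fFamilyDeriv, Pi.mul_apply]
  ring

section Probes

variable {a b c : ℝ}

theorem fFamilyDeriv_half_sub_sq_nonpos (ha : 0 ≤ a) (hab : a ≤ b) (hbc : b ≤ c)
    (hb : b ≤ 1 / 4) : fFamilyDeriv a b c (a / 2 - a ^ 2 / 4) ≤ 0 := by
  set p := a / 2 - a ^ 2 / 4 with hp
  have key : fFamilyDeriv a b c p
      = a ^ 2 / 4 * (2 * b - a + 3 * a ^ 2 / 4 - 1) * ((c - p) * (1 - p))
        - p * (a - p) * (b - p) * (c + 1 - 2 * p) := by
    simp only [fFamilyDeriv, hp]; ring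
  have hp₀ : 0 ≤ p := by nlinarith
  have hpa : p ≤ a := by nlinarith
  have hpb : p ≤ 1 / 8 := by nlinarith
  have hneg : a ^ 2 / 4 * (2 * b - a + 3 * a ^ 2 / 4 - 1) * ((c - p) * (1 - p)) ≤ 0 :=
    mul_nonpos_of_nonpos_of_nonneg
      (mul_nonpos_of_nonneg_of_nonpos (by positivity) (by nlinarith))
      (mul_nonneg (by linarith) (by linarith))
  have hpos : 0 ≤ p * (a - p) * (b - p) * (c + 1 - 2 * p) :=
    mul_nonneg (mul_nonneg (mul_nonneg hp₀ (by linarith)) (by linarith)) (by linarith)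
  rw [key]
  linarith

-- `F' = g' · (x - c)(x - 1) + g · (2x - c - 1)` with `g = x(x - a)(x - b)`, and at
-- `q = (a + b)/2 - e` one has `g' = -(((b - a)/2)² + (a + b)e - 3e²)`, `g = q(e² - ((b - a)/2)²)`.
theorem fFamilyDeriv_eq_near_midpoint {q e : ℝ} (hq : q = (a + b) / 2 - e) :
    fFamilyDeriv a b c q = ((b - a) / 2) ^ 2 * (q * (c + 1 - 2 * q) - (c - q) * (1 - q))
      - e ^ 2 * (q * (c + 1 - 2 * q)) - e * (a + b - 3 * e) * ((c - q) * (1 - q)) := by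
  simp only [fFamilyDeriv, hq]; ring

theorem fFamilyDeriv_midpoint_sub_sq_nonpos (ha : 0 ≤ a) (hab : a ≤ b) (hb : b ≤ 1 / 4)
    (hc : 1 / 2 ≤ c) : fFamilyDeriv a b c ((a + b) / 2 - a ^ 2 / 4) ≤ 0 := by
  set e := a ^ 2 / 4 with he
  set q := (a + b) / 2 - e with hq
  rw [fFamilyDeriv_eq_near_midpoint hq]
  have he₀ : 0 ≤ e := by positivity
  have he₁ : e ≤ 1 / 64 := by nlinarith
  have hs : 0 ≤ a + b - 3 * e := by nlinarith
  have hq₀ : 0 ≤ q := by nlinarith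
  have hq₁ : q ≤ 1 / 4 := by linarith
  have hT₁ : 0 ≤ q * (c + 1 - 2 * q) := mul_nonneg hq₀ (by linarith)
  have hT₂ : 3 / 16 ≤ (c - q) * (1 - q) := by
    nlinarith [mul_le_mul (show 1 / 4 ≤ c - q by linarith) (show 3 / 4 ≤ 1 - q by linarith)
      (by norm_num) (by linarith)]
  suffices ((b - a) / 2) ^ 2 * (q * (c + 1 - 2 * q) - (c - q) * (1 - q))
      ≤ e * (a + b - 3 * e) * ((c - q) * (1 - q)) by
    nlinarith [mul_nonneg (sq_nonneg e) hT₁]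
  have hgap : q * (c + 1 - 2 * q) - (c - q) * (1 - q) ≤ -1 / 2 + 3 * q - 3 * q ^ 2 := by
    nlinarith [mul_nonneg (sub_nonneg.2 hc) (show 0 ≤ 1 - 2 * q by linarith)]
  rcases le_or_gt (q * (c + 1 - 2 * q) - (c - q) * (1 - q)) 0 with hD | hD
  · calc ((b - a) / 2) ^ 2 * (q * (c + 1 - 2 * q) - (c - q) * (1 - q)) ≤ 0 :=
          mul_nonpos_of_nonneg_of_nonpos (sq_nonneg _) hD
      _ ≤ _ := mul_nonneg (mul_nonneg he₀ hs) (by linarith)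
  · -- a positive gap forces `q` near `1/4`, hence `a` large and `b - a` small
    have hq' : 21 / 100 ≤ q := by
      by_contra! h
      nlinarith [mul_nonneg (sub_nonneg.2 h.le) (show 0 ≤ 79 / 100 - q by linarith)]
    have ha' : 17 / 100 ≤ a := by linarith
    have hd : ((b - a) / 2) ^ 2 ≤ (1 / 25) ^ 2 :=
      pow_le_pow_left₀ (by linarith) (by linarith) 2
    have hD' : q * (c + 1 - 2 * q) - (c - q) * (1 - q) ≤ 1 / 16 := by
      nlinarith [mul_nonneg (show 0 ≤ 1 / 4 - q by linarith) (show 0 ≤ 3 / 4 - q by linarith)]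
    have he' : 289 / 40000 ≤ e := by nlinarith [mul_le_mul ha' ha' (by norm_num) ha]
    have hs' : 37 / 100 ≤ a + b - 3 * e := by linarith
    calc ((b - a) / 2) ^ 2 * (q * (c + 1 - 2 * q) - (c - q) * (1 - q))
        ≤ (1 / 25) ^ 2 * (1 / 16) := mul_le_mul hd hD' hD.le (by norm_num)
      _ ≤ 289 / 40000 * (37 / 100) * (3 / 16) := by norm_num
      _ ≤ e * (a + b - 3 * e) * ((c - q) * (1 - q)) :=
          mul_le_mul (mul_le_mul he' hs' (by norm_num) he₀) hT₂ (by norm_num) (mul_nonneg he₀ hs)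

theorem fFamilyDeriv_eleven_tenths_pos (hab : a ≤ b) (hb₀ : 0 < b) (hb : b ≤ 1 / 4)
    (hc : 1 / 2 ≤ c) : 0 < fFamilyDeriv a b c (11 * b / 10) := by
  set R := 460 * c - 528 * b - 528 * b * c + 605 * b ^ 2
  set S := 2400 * c - 2860 * b - 2860 * b * c + 3388 * b ^ 2
  have key : fFamilyDeriv a b c (11 * b / 10) = b / 2000 * (b * R + (b - a) * S) := by
    simp only [fFamilyDeriv, R, S]; ring
  have hR : 0 < R := by
    nlinarith [mul_nonneg (show 0 ≤ 1 / 4 - b by linarith) (show 0 ≤ c by linarith)]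
  have hS : 0 ≤ S := by
    nlinarith [mul_nonneg (sub_nonneg.2 hc) (show 0 ≤ 2400 - 2860 * b by linarith),
      mul_nonneg (show 0 ≤ 1 - 4 * b by linarith) (show 0 ≤ 1200 - 847 * b by linarith)]
  rw [key]
  exact mul_pos (by positivity)
    (add_pos_of_pos_of_nonneg (mul_pos hb₀ hR) (mul_nonneg (sub_nonneg.2 hab) hS))

theorem fFamilyDeriv_eight_fifths_nonneg (ha : 0 ≤ a) (hab : a ≤ b) (hb : b ≤ 1 / 4)
    (hc : 1 / 2 ≤ c) : 0 ≤ fFamilyDeriv a b c (8 * b / 5) := by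
  set V := 560 * c - 1088 * b - 1088 * b * c + 2048 * b ^ 2
  set W := 285 * c - 528 * b - 528 * b * c + 960 * b ^ 2
  have key : fFamilyDeriv a b c (8 * b / 5) = b / 125 * ((b - a) * V + a * W) := by
    simp only [fFamilyDeriv, V, W]; ring
  have hV : 0 ≤ V := by
    nlinarith [mul_nonneg (sub_nonneg.2 hc) (show 0 ≤ 560 - 1088 * b by linarith),
      mul_nonneg (show 0 ≤ 1 - 4 * b by linarith) (show 0 ≤ 35 - 64 * b by linarith)]
  have hW : 0 ≤ W := by
    nlinarith [mul_nonneg (sub_nonneg.2 hc) (show 0 ≤ 285 - 528 * b by linarith),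
      mul_nonneg (show 0 ≤ 1 - 4 * b by linarith) (show 0 ≤ 285 / 2 - 240 * b by linarith)]
  have hb₀ : 0 ≤ b := by linarith
  rw [key]
  exact mul_nonneg (by positivity)
    (add_nonneg (mul_nonneg (sub_nonneg.2 hab) hV) (mul_nonneg ha hW))

theorem fFamilyDeriv_last_midpoint_sub_nonpos (ha : 0 ≤ a) (hab : a ≤ b) (hbc : b ≤ c)
    (hb : b ≤ 1 / 4) : fFamilyDeriv a b c ((c + 1 - b) / 2) ≤ 0 := by
  set x := (c + 1 - b) / 2 with hx
  -- the splitting of `F'` above, now with `(x - c)(x - 1) = b²/4 - ((1 - c)/2)²`, `2x - c - 1 = -b`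
  have key : fFamilyDeriv a b c x
      = ((x - a) * (x - b) + x * (x - b) + x * (x - a)) * (b ^ 2 / 4 - ((1 - c) / 2) ^ 2)
        - b * (x * (x - a) * (x - b)) := by
    simp only [fFamilyDeriv, hx]; ring
  have hB : 3 * b ≤ 4 * (x - b) := by linarith
  have hAB : 0 ≤ (x - a) * (x - b) := mul_nonneg (by linarith) (by linarith)
  have hXB : 0 ≤ x * (x - b) := mul_nonneg (by linarith) (by linarith)
  have hXA : 0 ≤ x * (x - a) := mul_nonneg (by linarith) (by linarith)
  have hg : b * ((x - a) * (x - b) + x * (x - b) + x * (x - a)) ≤ 4 * (x * (x - a) * (x - b)) := by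
    nlinarith [mul_le_mul_of_nonneg_right (show 3 * b ≤ 4 * x by linarith) hAB,
      mul_le_mul_of_nonneg_right (show 3 * b ≤ 4 * (x - a) by linarith) hXB,
      mul_le_mul_of_nonneg_right hB hXA]
  rw [key]
  nlinarith [mul_nonneg (add_nonneg (add_nonneg hAB hXB) hXA) (sq_nonneg ((1 - c) / 2)),
    mul_le_mul_of_nonneg_left hg (show 0 ≤ b / 4 by linarith)]

theorem fFamilyDeriv_last_midpoint_nonpos (ha : 0 ≤ a) (hab : a ≤ b) (hb : b ≤ (c + 1) / 2) :
    fFamilyDeriv a b c ((c + 1) / 2) ≤ 0 := by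
  set s := (c + 1) / 2 with hs
  have key : fFamilyDeriv a b c s
      = -(((1 - c) / 2) ^ 2 * ((s - a) * (s - b) + s * (s - b) + s * (s - a))) := by
    simp only [fFamilyDeriv, hs]; ring
  have hsa : 0 ≤ s - a := by linarith
  have hsb : 0 ≤ s - b := by linarith
  have hs₀ : 0 ≤ s := by linarith
  rw [key, neg_nonpos]
  exact mul_nonneg (sq_nonneg _)
    (add_nonneg (add_nonneg (mul_nonneg hsa hsb) (mul_nonneg hs₀ hsb)) (mul_nonneg hs₀ hsa))

end Probes

theorem F_family_b_sixth_quarter_Lplus_general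
    (a b c : ℝ) (ha : 0 ≤ a) (hab : a ≤ b) (hbc : b ≤ c)
    (hb1 : 1 / 6 ≤ b) (hb2 : b ≤ 1 / 4) (hc : 1 / 2 ≤ c)
    (ξ₁ ξ₂ ξ₃ ξ₄ : ℝ) (hξ12 : ξ₁ ≤ ξ₂) (hξ23 : ξ₂ ≤ ξ₃) (hξ34 : ξ₃ ≤ ξ₄)
    (hder : ∀ x : ℝ,
      deriv (fun t : ℝ => t * (t - a) * (t - b) * (t - c) * (t - 1)) x
        = 5 * (x - ξ₁) * (x - ξ₂) * (x - ξ₃) * (x - ξ₄))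
    (z₁ z₂ z₃ z₄ m mt : ℝ)
    (hz₁ : z₁ = a / 2) (hz₂ : z₂ = (a + b) / 2)
    (hm : m = min (min (z₂ - z₁) (z₃ - z₂)) (z₄ - z₃))
    (hmt : mt = min (min (ξ₂ - ξ₁) (ξ₃ - ξ₂)) (ξ₄ - ξ₃)) :
    m ≤ mt := by
  have hF' (x : ℝ) : 5 * (x - ξ₁) * (x - ξ₂) * (x - ξ₃) * (x - ξ₄) = fFamilyDeriv a b c x := by
    rw [← hder x, (hasDerivAt_fFamily a b c x).deriv]
  have h5 : (0 : ℝ) < 5 := by norm_num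
  have hsign (t : ℝ) := quartic_nonpos_iff (t := t) h5 hξ12 hξ23 hξ34
  have hξ₁ : ξ₁ ≤ a / 2 - a ^ 2 / 4 := by
    rcases (hsign _).1 ((hF' _).trans_le (fFamilyDeriv_half_sub_sq_nonpos ha hab hbc hb2))
      with h | h <;> linarith
  have hξ₄ : (c + 1) / 2 ≤ ξ₄ := by
    rcases (hsign _).1 ((hF' _).trans_le (fFamilyDeriv_last_midpoint_nonpos ha hab (by linarith)))
      with h | h <;> linarith
  obtain ⟨hξ₂, hξ₃⟩ : ξ₂ < 11 * b / 10 ∧ 11 * b / 10 < ξ₃ :=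
    between_middle_roots_of_quartic_pos h5 hξ12 hξ23 hξ34 (by nlinarith) (by linarith)
      ((fFamilyDeriv_eleven_tenths_pos hab (by linarith) hb2 hc).trans_eq (hF' _).symm)
  have hξ₂' : (a + b) / 2 - a ^ 2 / 4 ≤ ξ₂ := by
    rcases (hsign _).1 ((hF' _).trans_le (fFamilyDeriv_midpoint_sub_sq_nonpos ha hab hb2 hc))
      with h | h <;> nlinarith
  have hξ₃' : 8 * b / 5 ≤ ξ₃ :=
    le_third_root_of_quartic_nonneg h5 hξ12 hξ23 (by linarith)
      ((fFamilyDeriv_eight_fifths_nonneg ha hab hb2 hc).trans_eq (hF' _).symm)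
  have hξ₃'' : ξ₃ ≤ (c + 1 - b) / 2 := by
    rcases (hsign _).1 ((hF' _).trans_le (fFamilyDeriv_last_midpoint_sub_nonpos ha hab hbc hb2))
      with h | h <;> linarith
  have hm_le : m ≤ b / 2 := by
    rw [hm, hz₁, hz₂]
    exact (min_le_left _ _).trans ((min_le_left _ _).trans (by linarith))
  rw [hmt]
  exact hm_le.trans (le_min (le_min (by linarith) (by linarith)) (by linarith))

/-- For `F(x) = x(x-a)(x-b)(x-c)(x-1)` with `0 ≤ a ≤ b ≤ c ≤ 1`, `1/6 ≤ b ≤ 1/4` and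
`c ≥ 1/2`, the case L+ holds: `m ≤ m̃`. -/
theorem F_family_b_sixth_quarter_Lplus
    (a b c : ℝ) (ha : 0 ≤ a) (hab : a ≤ b) (hbc : b ≤ c) (hc1 : c ≤ 1)
    (hb1 : 1 / 6 ≤ b) (hb2 : b ≤ 1 / 4) (hc : 1 / 2 ≤ c)
    (ξ₁ ξ₂ ξ₃ ξ₄ : ℝ) (hξ12 : ξ₁ ≤ ξ₂) (hξ23 : ξ₂ ≤ ξ₃) (hξ34 : ξ₃ ≤ ξ₄)
    (hder : ∀ x : ℝ,
      deriv (fun t : ℝ => t * (t - a) * (t - b) * (t - c) * (t - 1)) x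
        = 5 * (x - ξ₁) * (x - ξ₂) * (x - ξ₃) * (x - ξ₄))
    (z₁ z₂ z₃ z₄ m mt : ℝ)
    (hz₁ : z₁ = a / 2) (hz₂ : z₂ = (a + b) / 2)
    (hz₃ : z₃ = (b + c) / 2) (hz₄ : z₄ = (c + 1) / 2)
    (hm : m = min (min (z₂ - z₁) (z₃ - z₂)) (z₄ - z₃))
    (hmt : mt = min (min (ξ₂ - ξ₁) (ξ₃ - ξ₂)) (ξ₄ - ξ₃)) :
    m ≤ mt :=
  F_family_b_sixth_quarter_Lplus_general a b c ha hab hbc hb1 hb2 hc ξ₁ ξ₂ ξ₃ ξ₄ hξ12 hξ23 hξ34 hder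
    z₁ z₂ z₃ z₄ m mt hz₁ hz₂ hm hmt
end

section
/- Under the hypotheses of the F-family, if in addition 1/6 ≤ b ≤ 1/4 and c ≥ 1/2, then ξ₄ − ξ₃ > z₂ − z₁. -/
/-!
With `F′ = 5 (x - ξ₁)(x - ξ₂)(x - ξ₃)(x - ξ₄)`, the roots are located by the signs of `F′` at four
points: `F′(a) = a(a - b)(a - c)(a - 1) ≤ 0` forces `ξ₁ ≤ a < 1/3`, then `F′(1/3) > 0` forces
`ξ₂ < 1/3`, and `F′(7/10) < 0`, `F′(5/6) < 0` put both points into `(ξ₃, ξ₄)`. Hence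
`ξ₄ - ξ₃ > 5/6 - 7/10 > 1/8 ≥ b/2 = z₂ - z₁`.
-/

section OrderedRoots

variable {ξ₁ ξ₂ ξ₃ ξ₄ x : ℝ}

lemma le_of_prod_sub_roots_nonpos (h12 : ξ₁ ≤ ξ₂) (h23 : ξ₂ ≤ ξ₃) (h34 : ξ₃ ≤ ξ₄)
    (h : (x - ξ₁) * (x - ξ₂) * (x - ξ₃) * (x - ξ₄) ≤ 0) : ξ₁ ≤ x := by
  by_contra! hx
  have : 0 < (ξ₁ - x) * (ξ₂ - x) * (ξ₃ - x) * (ξ₄ - x) := by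
    have : 0 < ξ₁ - x := by linarith
    have : 0 < ξ₂ - x := by linarith
    have : 0 < ξ₃ - x := by linarith
    have : 0 < ξ₄ - x := by linarith
    positivity
  nlinarith

lemma lt_of_prod_sub_roots_pos (h23 : ξ₂ ≤ ξ₃) (h34 : ξ₃ ≤ ξ₄) (hx : ξ₁ ≤ x)
    (h : 0 < (x - ξ₁) * (x - ξ₂) * (x - ξ₃) * (x - ξ₄)) : ξ₂ < x := by
  by_contra! hx2
  have : 0 ≤ (x - ξ₁) * (ξ₂ - x) * (ξ₃ - x) * (ξ₄ - x) := by
    have : 0 ≤ x - ξ₁ := by linarith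
    have : 0 ≤ ξ₂ - x := by linarith
    have : 0 ≤ ξ₃ - x := by linarith
    have : 0 ≤ ξ₄ - x := by linarith
    positivity
  nlinarith

lemma mem_Ioo_of_prod_sub_roots_neg (h12 : ξ₁ ≤ ξ₂) (h34 : ξ₃ ≤ ξ₄) (hx : ξ₂ ≤ x)
    (h : (x - ξ₁) * (x - ξ₂) * (x - ξ₃) * (x - ξ₄) < 0) : x ∈ Set.Ioo ξ₃ ξ₄ := by
  have : 0 ≤ x - ξ₁ := by linarith
  have : 0 ≤ x - ξ₂ := by linarith
  constructor
  · by_contra! hx3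
    have : 0 ≤ (x - ξ₁) * (x - ξ₂) * (ξ₃ - x) * (ξ₄ - x) := by
      have : 0 ≤ ξ₃ - x := by linarith
      have : 0 ≤ ξ₄ - x := by linarith
      positivity
    nlinarith
  · by_contra! hx4
    have : 0 ≤ (x - ξ₁) * (x - ξ₂) * (x - ξ₃) * (x - ξ₄) := by
      have : 0 ≤ x - ξ₃ := by linarith
      have : 0 ≤ x - ξ₄ := by linarith
      positivity
    linarith

end OrderedRoots

section Family

variable {a b c : ℝ}

def familyDeriv (a b c x : ℝ) : ℝ :=
  (x - a) * (x - b) * (x - c) * (x - 1) + x * (x - b) * (x - c) * (x - 1)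
    + x * (x - a) * (x - c) * (x - 1) + x * (x - a) * (x - b) * (x - 1)
    + x * (x - a) * (x - b) * (x - c)

lemma deriv_family (a b c x : ℝ) :
    deriv (fun t : ℝ => t * (t - a) * (t - b) * (t - c) * (t - 1)) x = familyDeriv a b c x := by
  have hid := hasDerivAt_id' (𝕜 := ℝ) (x := x)
  have h := (((hid.mul (hid.sub_const a)).mul (hid.sub_const b)).mul (hid.sub_const c)).mul
    (hid.sub_const 1)
  exact h.deriv.trans (by simp only [familyDeriv, Pi.mul_apply]; ring)

lemma familyDeriv_self_nonpos (ha : 0 ≤ a) (hab : a ≤ b) (hac : a ≤ c) (ha1 : a ≤ 1) :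
    familyDeriv a b c a ≤ 0 := by
  have hsplit : familyDeriv a b c a = -(a * ((b - a) * (c - a)) * (1 - a)) := by
    rw [familyDeriv]; ring
  have := mul_nonneg (mul_nonneg ha (mul_nonneg (sub_nonneg.2 hab) (sub_nonneg.2 hac)))
    (sub_nonneg.2 ha1)
  linarith

lemma familyDeriv_one_third_pos (ha : 0 ≤ a) (hab : a ≤ b) (hb : b ≤ 1 / 4) (hc : 1 / 2 ≤ c) :
    0 < familyDeriv a b c (1 / 3) := by
  have hu : 0 ≤ 1 / 3 - a := by linarith
  have hv : 0 ≤ 1 / 3 - b := by linarith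
  have hc := sub_nonneg.2 hc
  rw [familyDeriv]
  nlinarith [mul_nonneg (mul_nonneg hu hv) hc, mul_nonneg hu hc, mul_nonneg hv hc,
    mul_nonneg hu (sub_nonneg.2 hb)]

/-- On the triangle `0 ≤ a ≤ b ≤ 1/4`, the certificate multiplies two of the barycentric
coordinates `a, b - a, 1/4 - b` with one of `c - 1/2, 1 - c`. -/
lemma familyDeriv_neg {x : ℝ} (ha : 0 ≤ a) (hab : a ≤ b) (hb : b ≤ 1 / 4) (hc : 1 / 2 ≤ c)
    (hc1 : c ≤ 1) (hx : x = 7 / 10 ∨ x = 5 / 6) : familyDeriv a b c x < 0 := by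
  have hab := sub_nonneg.2 hab
  have hb := sub_nonneg.2 hb
  have hc := sub_nonneg.2 hc
  have hc1 := sub_nonneg.2 hc1
  rcases hx with rfl | rfl <;> rw [familyDeriv] <;>
  nlinarith [mul_nonneg (mul_nonneg ha hab) hc, mul_nonneg (mul_nonneg ha hab) hc1,
    mul_nonneg (mul_nonneg ha hb) hc, mul_nonneg (mul_nonneg ha hb) hc1,
    mul_nonneg (mul_nonneg hab hb) hc, mul_nonneg (mul_nonneg hab hb) hc1]

end Family

theorem F_family_xi4_sub_xi3_gt_z2z1_general
    (a b c : ℝ) (ha : 0 ≤ a) (hab : a ≤ b) (hc1 : c ≤ 1)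
    (hb2 : b ≤ 1 / 4) (hc : 1 / 2 ≤ c)
    (ξ₁ ξ₂ ξ₃ ξ₄ : ℝ) (hξ12 : ξ₁ ≤ ξ₂) (hξ23 : ξ₂ ≤ ξ₃) (hξ34 : ξ₃ ≤ ξ₄)
    (hder : ∀ x : ℝ,
      deriv (fun t : ℝ => t * (t - a) * (t - b) * (t - c) * (t - 1)) x
        = 5 * (x - ξ₁) * (x - ξ₂) * (x - ξ₃) * (x - ξ₄))
    (z₁ z₂ : ℝ)
    (hz₁ : z₁ = a / 2) (hz₂ : z₂ = (a + b) / 2) :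
    ξ₄ - ξ₃ > z₂ - z₁ := by
  have hF' (x : ℝ) :
      familyDeriv a b c x = 5 * ((x - ξ₁) * (x - ξ₂) * (x - ξ₃) * (x - ξ₄)) := by
    rw [← deriv_family, hder]; ring
  have hξ₁ : ξ₁ ≤ a := le_of_prod_sub_roots_nonpos hξ12 hξ23 hξ34 <| by
    linarith [hF' a, familyDeriv_self_nonpos (c := c) ha hab (by linarith) (by linarith)]
  have hξ₂ : ξ₂ < 1 / 3 := lt_of_prod_sub_roots_pos hξ23 hξ34 (hξ₁.trans (by linarith)) <| by
    linarith [hF' (1 / 3), familyDeriv_one_third_pos ha hab hb2 hc]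
  have hξ₃ : ξ₃ < 7 / 10 := (mem_Ioo_of_prod_sub_roots_neg hξ12 hξ34 (by linarith) <| by
    linarith [hF' (7 / 10), familyDeriv_neg ha hab hb2 hc hc1 (.inl rfl)]).1
  have hξ₄ : 5 / 6 < ξ₄ := (mem_Ioo_of_prod_sub_roots_neg hξ12 hξ34 (by linarith) <| by
    linarith [hF' (5 / 6), familyDeriv_neg ha hab hb2 hc hc1 (.inr rfl)]).2
  rw [hz₁, hz₂]
  linarith

/-- For `F(x) = x(x-a)(x-b)(x-c)(x-1)` with `0 ≤ a ≤ b ≤ c ≤ 1`, `1/6 ≤ b ≤ 1/4` and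
`c ≥ 1/2`, one has `ξ₄ - ξ₃ > z₂ - z₁`. -/
theorem F_family_xi4_sub_xi3_gt_z2z1
    (a b c : ℝ) (ha : 0 ≤ a) (hab : a ≤ b) (hbc : b ≤ c) (hc1 : c ≤ 1)
    (hb1 : 1 / 6 ≤ b) (hb2 : b ≤ 1 / 4) (hc : 1 / 2 ≤ c)
    (ξ₁ ξ₂ ξ₃ ξ₄ : ℝ) (hξ12 : ξ₁ ≤ ξ₂) (hξ23 : ξ₂ ≤ ξ₃) (hξ34 : ξ₃ ≤ ξ₄)
    (hder : ∀ x : ℝ,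
      deriv (fun t : ℝ => t * (t - a) * (t - b) * (t - c) * (t - 1)) x
        = 5 * (x - ξ₁) * (x - ξ₂) * (x - ξ₃) * (x - ξ₄))
    (z₁ z₂ z₃ z₄ : ℝ)
    (hz₁ : z₁ = a / 2) (hz₂ : z₂ = (a + b) / 2)
    (hz₃ : z₃ = (b + c) / 2) (hz₄ : z₄ = (c + 1) / 2) :
    ξ₄ - ξ₃ > z₂ - z₁ :=
  F_family_xi4_sub_xi3_gt_z2z1_general a b c ha hab hc1 hb2 hc ξ₁ ξ₂ ξ₃ ξ₄ hξ12 hξ23 hξ34 hder z₁ z₂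
    hz₁ hz₂
end
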